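/- arXiv:2205.12011 — 10 statements merged into one kernel-verified Lean document; each statement's English description precedes it below -/
import Mathlib

section
/- For every l ∈ {0,…,r} and every j ∈ {0,…,l}, the point μ_l lies in the domain D_j, and if j < l then g_j(μ_l) = σ_j·exp(μ_{l−j−1,l}). (This is Proposition 5.4 of the paper for a fixed value of the parameter t.) -/
/-- The iterated functions `g_l` of a logarithmic scale (for a fixed parameter `t`):
`g_0 x = x - Θ 0`, `g_{l+1} x = log (σ l * g_l x) - Θ (l+1)`. -/
noncomputable def gIter (Θ σ : ℕ → ℝ) : ℕ → ℝ → ℝ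
  | 0, x => x - Θ 0
  | l + 1, x => Real.log (σ l * gIter Θ σ l x) - Θ (l + 1)

/-- The domains `D_l`: `D_0 = ℝ`, `D_{l+1} = {x ∈ D_l : σ l * g_l x > 0}`.
Note that the final domain `D` of the paper equals `DIter Θ σ (r+1)`. -/
def DIter (Θ σ : ℕ → ℝ) : ℕ → Set ℝ
  | 0 => Set.univ
  | l + 1 => {x | x ∈ DIter Θ σ l ∧ 0 < σ l * gIter Θ σ l x}

/-- The auxiliary numbers `μ_{j,l}`: `μ_{0,l} = Θ l`,
`μ_{j+1,l} = Θ (l-(j+1)) + σ (l-(j+1)) * exp (μ_{j,l})`. -/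
noncomputable def muAux (Θ σ : ℕ → ℝ) (l : ℕ) : ℕ → ℝ
  | 0 => Θ l
  | j + 1 => Θ (l - (j + 1)) + σ (l - (j + 1)) * Real.exp (muAux Θ σ l j)

/-- The numbers `μ_l := μ_{l,l}`. -/
noncomputable def mu (Θ σ : ℕ → ℝ) (l : ℕ) : ℝ := muAux Θ σ l l

/-- **Proposition 5.4** (for a fixed value of the parameter `t`): for every `l ∈ {0,…,r}`
and every `j ∈ {0,…,l}`, the point `μ_l` lies in `D_j`, and if `j < l` then
`g_j (μ_l) = σ j * exp (μ_{l-j-1, l})`. -/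
theorem mu_mem_DIter_and_gIter_eq (r : ℕ) (Θ σ : ℕ → ℝ)
    (hσ : ∀ i, i ≤ r → σ i = 1 ∨ σ i = -1)
    (l : ℕ) (hl : l ≤ r) (j : ℕ) (hj : j ≤ l) :
    mu Θ σ l ∈ DIter Θ σ j ∧
      (j < l → gIter Θ σ j (mu Θ σ l) = σ j * Real.exp (muAux Θ σ l (l - j - 1))) := by
  induction j with
  | zero =>
    refine ⟨Set.mem_univ _, ?_⟩
    intro h0l
    obtain ⟨k, rfl⟩ : ∃ k, l = k + 1 := ⟨l - 1, by omega⟩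
    show mu Θ σ (k+1) - Θ 0 = σ 0 * Real.exp (muAux Θ σ (k+1) (k + 1 - 0 - 1))
    have h : k + 1 - (k + 1) = 0 := by omega
    simp only [mu, muAux, h]
    have h2 : k + 1 - 0 - 1 = k := by omega
    rw [h2]; ring
  | succ j ih =>
    obtain ⟨ihmem, iheq⟩ := ih (by omega)
    have heq := iheq (by omega)
    have hsq : σ j * σ j = 1 := by
      rcases hσ j (by omega) with h | h <;> rw [h] <;> norm_num
    have hpos : 0 < σ j * gIter Θ σ j (mu Θ σ l) := by
      rw [heq, ← mul_assoc, hsq, one_mul]; exact Real.exp_pos _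
    refine ⟨⟨ihmem, hpos⟩, ?_⟩
    intro hlt
    show Real.log (σ j * gIter Θ σ j (mu Θ σ l)) - Θ (j+1) = _
    rw [heq, ← mul_assoc, hsq, one_mul, Real.log_exp]
    obtain ⟨m, hm⟩ : ∃ m, l - j - 1 = m + 1 := ⟨l - j - 2, by omega⟩
    rw [hm]
    have h1 : l - (m + 1) = j + 1 := by omega
    have h2 : l - (j + 1) - 1 = m := by omega
    simp only [muAux, h1, h2]
    ring
end

section
/- For every l ∈ {0,…,r}: μ_l ∈ D_l, g_l(μ_l) = 0, and μ_l is the unique zero of g_l on D_l, i.e. {x ∈ D_l : g_l(x) = 0} = {μ_l}. (Corollary 5.5 of the paper for a fixed value of the parameter t.) -/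
lemma gIter_injOn (Θ σ : ℕ → ℝ) :
    ∀ l, ∀ x ∈ DIter Θ σ l, ∀ y ∈ DIter Θ σ l,
      gIter Θ σ l x = gIter Θ σ l y → x = y := by
  intro l
  induction l with
  | zero => intro x _ y _ h; simpa [gIter] using h
  | succ l ih =>
    intro x hx y hy h
    obtain ⟨hx1, hx2⟩ := hx
    obtain ⟨hy1, hy2⟩ := hy
    simp only [gIter, sub_left_inj] at h
    have heq := Real.log_injOn_pos (Set.mem_Ioi.mpr hx2) (Set.mem_Ioi.mpr hy2) h
    have hσ : σ l ≠ 0 := by rintro h0; rw [h0] at hx2; simp at hx2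
    exact ih x hx1 y hy1 (mul_left_cancel₀ hσ heq)

lemma mu_key (r : ℕ) (Θ σ : ℕ → ℝ) (hσ : ∀ i, i ≤ r → σ i = 1 ∨ σ i = -1)
    (l : ℕ) (hl : l ≤ r) :
    ∀ k, k ≤ l → mu Θ σ l ∈ DIter Θ σ k ∧
      gIter Θ σ k (mu Θ σ l) = muAux Θ σ l (l - k) - Θ k := by
  intro k
  induction k with
  | zero => intro _; exact ⟨Set.mem_univ _, by simp [gIter, mu]⟩
  | succ k ih =>
    intro hk
    have hk' : k ≤ l := Nat.le_of_succ_le hk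
    obtain ⟨hmem, hval⟩ := ih hk'
    have hsub : l - k = (l - (k + 1)) + 1 := by omega
    have hexp : muAux Θ σ l (l - k) = Θ k + σ k * Real.exp (muAux Θ σ l (l - (k + 1))) := by
      rw [hsub]
      show Θ (l - (l - (k+1) + 1)) + σ (l - (l - (k+1) + 1)) * _ = _
      rw [show l - (l - (k + 1) + 1) = k by omega]
    have hgk : gIter Θ σ k (mu Θ σ l) = σ k * Real.exp (muAux Θ σ l (l - (k + 1))) := by
      rw [hval, hexp]; ring
    have hσk : σ k = 1 ∨ σ k = -1 := hσ k (by omega)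
    have heq : σ k * gIter Θ σ k (mu Θ σ l) = Real.exp (muAux Θ σ l (l - (k + 1))) := by
      rw [hgk, ← mul_assoc]
      rcases hσk with h | h <;> rw [h] <;> ring
    have hpos : 0 < σ k * gIter Θ σ k (mu Θ σ l) := by
      rw [heq]; exact Real.exp_pos _
    refine ⟨⟨hmem, hpos⟩, ?_⟩
    show Real.log (σ k * gIter Θ σ k (mu Θ σ l)) - Θ (k + 1) = _
    rw [heq, Real.log_exp]

/-- **Corollary 5.5** (for a fixed value of the parameter `t`): for every `l ∈ {0,…,r}`,
`μ_l ∈ D_l`, `g_l (μ_l) = 0`, and `μ_l` is the unique zero of `g_l` on `D_l`. -/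
theorem mu_unique_zero_of_gIter (r : ℕ) (Θ σ : ℕ → ℝ)
    (hσ : ∀ i, i ≤ r → σ i = 1 ∨ σ i = -1)
    (l : ℕ) (hl : l ≤ r) :
    mu Θ σ l ∈ DIter Θ σ l ∧ gIter Θ σ l (mu Θ σ l) = 0 ∧
      {x | x ∈ DIter Θ σ l ∧ gIter Θ σ l x = 0} = {mu Θ σ l} := by
  obtain ⟨hmem, hval⟩ := mu_key r Θ σ hσ l hl l le_rfl
  have hzero : gIter Θ σ l (mu Θ σ l) = 0 := by simpa [muAux] using hval
  refine ⟨hmem, hzero, ?_⟩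
  ext x
  simp only [Set.mem_setOf_eq, Set.mem_singleton_iff]
  constructor
  · rintro ⟨hxD, hx0⟩
    exact gIter_injOn Θ σ l x hxD _ hmem (hx0.trans hzero.symm)
  · rintro rfl
    exact ⟨hmem, hzero⟩
end

section
/- Let C ⊆ D be a nonempty set and let l ∈ {0,…,r}. If ∏_{j=0}^{l} σ_j = 1 then μ_l < x for every x ∈ C, and if ∏_{j=0}^{l} σ_j = −1 then x < μ_l for every x ∈ C. (Proposition 5.6(2) of the paper for a fixed value of the parameter t.) -/
/-- Auxiliary: `E_0 = 0`, `E_{j+1} = exp (μ_{j,l})`. -/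
noncomputable def Eaux (Θ σ : ℕ → ℝ) (l : ℕ) : ℕ → ℝ
  | 0 => 0
  | j + 1 => Real.exp (muAux Θ σ l j)

lemma muAux_eq (Θ σ : ℕ → ℝ) (l j : ℕ) :
    muAux Θ σ l j = Θ (l - j) + σ (l - j) * Eaux Θ σ l j := by
  cases j with
  | zero => simp [muAux, Eaux]
  | succ j => rfl

lemma DIter_mono (Θ σ : ℕ → ℝ) {m n : ℕ} (h : m ≤ n) :
    DIter Θ σ n ⊆ DIter Θ σ m := by
  induction n with
  | zero => simp_all
  | succ n ih =>
    rcases Nat.eq_or_lt_of_le h with rfl | h'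
    · exact fun x hx => hx
    · exact fun x hx => ih (by omega) hx.1

lemma key (r : ℕ) (Θ σ : ℕ → ℝ) (hσ : ∀ i, i ≤ r → σ i = 1 ∨ σ i = -1)
    (x : ℝ) (hx : x ∈ DIter Θ σ (r + 1)) (l : ℕ) (hl : l ≤ r) :
    ∀ j, j ≤ l →
      ((∏ i ∈ Finset.Ico (l - j) (l + 1), σ i) = 1 →
        σ (l - j) * Eaux Θ σ l j < gIter Θ σ (l - j) x) ∧
      ((∏ i ∈ Finset.Ico (l - j) (l + 1), σ i) = -1 →
        gIter Θ σ (l - j) x < σ (l - j) * Eaux Θ σ l j) := by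
  intro j
  induction j with
  | zero =>
    intro _
    have hx' : x ∈ DIter Θ σ (l + 1) := DIter_mono Θ σ (by omega) hx
    have hpos : 0 < σ l * gIter Θ σ l x := hx'.2
    have hIco : Finset.Ico l (l + 1) = {l} := by
      ext i; simp
    rcases hσ l hl with hs | hs
    · constructor
      · intro _
        simp only [Nat.sub_zero, Eaux, hs, one_mul, mul_zero]
        rw [hs, one_mul] at hpos
        linarith
      · intro h
        rw [Nat.sub_zero, hIco, Finset.prod_singleton, hs] at h
        norm_num at h
    · constructor
      · intro h
        rw [Nat.sub_zero, hIco, Finset.prod_singleton, hs] at h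
        norm_num at h
      · intro _
        simp only [Nat.sub_zero, Eaux, hs, mul_zero]
        rw [hs] at hpos
        linarith
  | succ j ih =>
    intro hj
    obtain ⟨ih1, ih2⟩ := ih (by omega)
    set k := l - (j + 1) with hkdef
    have hk1 : l - j = k + 1 := by omega
    have hx' : x ∈ DIter Θ σ (k + 1) := DIter_mono Θ σ (by omega) hx
    have hy : 0 < σ k * gIter Θ σ k x := hx'.2
    have hσk : σ k = 1 ∨ σ k = -1 := hσ k (by omega)
    have hprod : ∏ i ∈ Finset.Ico k (l + 1), σ i
        = σ k * ∏ i ∈ Finset.Ico (k + 1) (l + 1), σ i :=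
      Finset.prod_eq_prod_Ico_succ_bot (by omega) _
    rw [hk1] at ih1 ih2
    have hg : gIter Θ σ (k + 1) x = Real.log (σ k * gIter Θ σ k x) - Θ (k + 1) := rfl
    have hmu : muAux Θ σ l j = Θ (k + 1) + σ (k + 1) * Eaux Θ σ l j := by
      rw [muAux_eq, hk1]
    have hE : Eaux Θ σ l (j + 1) = Real.exp (muAux Θ σ l j) := rfl
    constructor
    · intro h1
      rw [hprod] at h1
      rcases hσk with hs | hs
      · rw [hs, one_mul] at h1
        have h2 := ih1 h1
        rw [hg] at h2
        have hlog : muAux Θ σ l j < Real.log (σ k * gIter Θ σ k x) := by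
          rw [hmu]; linarith
        have h3 : Eaux Θ σ l (j + 1) < σ k * gIter Θ σ k x := by
          rw [hE]
          calc Real.exp (muAux Θ σ l j)
              < Real.exp (Real.log (σ k * gIter Θ σ k x)) := Real.exp_lt_exp.mpr hlog
            _ = σ k * gIter Θ σ k x := Real.exp_log hy
        rw [hs, one_mul] at h3 ⊢
        exact h3
      · rw [hs] at h1
        have hP : ∏ i ∈ Finset.Ico (k + 1) (l + 1), σ i = -1 := by linarith
        have h2 := ih2 hP
        rw [hg] at h2
        have hlog : Real.log (σ k * gIter Θ σ k x) < muAux Θ σ l j := by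
          rw [hmu]; linarith
        have h3 : σ k * gIter Θ σ k x < Eaux Θ σ l (j + 1) := by
          rw [hE]
          calc σ k * gIter Θ σ k x
              = Real.exp (Real.log (σ k * gIter Θ σ k x)) := (Real.exp_log hy).symm
            _ < Real.exp (muAux Θ σ l j) := Real.exp_lt_exp.mpr hlog
        rw [hs] at h3 ⊢
        linarith
    · intro h1
      rw [hprod] at h1
      rcases hσk with hs | hs
      · rw [hs, one_mul] at h1
        have h2 := ih2 h1
        rw [hg] at h2
        have hlog : Real.log (σ k * gIter Θ σ k x) < muAux Θ σ l j := by
          rw [hmu]; linarith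
        have h3 : σ k * gIter Θ σ k x < Eaux Θ σ l (j + 1) := by
          rw [hE]
          calc σ k * gIter Θ σ k x
              = Real.exp (Real.log (σ k * gIter Θ σ k x)) := (Real.exp_log hy).symm
            _ < Real.exp (muAux Θ σ l j) := Real.exp_lt_exp.mpr hlog
        rw [hs, one_mul] at h3 ⊢
        exact h3
      · rw [hs] at h1
        have hP : ∏ i ∈ Finset.Ico (k + 1) (l + 1), σ i = 1 := by linarith
        have h2 := ih1 hP
        rw [hg] at h2
        have hlog : muAux Θ σ l j < Real.log (σ k * gIter Θ σ k x) := by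
          rw [hmu]; linarith
        have h3 : Eaux Θ σ l (j + 1) < σ k * gIter Θ σ k x := by
          rw [hE]
          calc Real.exp (muAux Θ σ l j)
              < Real.exp (Real.log (σ k * gIter Θ σ k x)) := Real.exp_lt_exp.mpr hlog
            _ = σ k * gIter Θ σ k x := Real.exp_log hy
        rw [hs] at h3 ⊢
        linarith

/-- **Proposition 5.6(2)** (for a fixed value of the parameter `t`): let `C ⊆ D` be
nonempty (where `D = DIter Θ σ (r+1)`) and `l ∈ {0,…,r}`. If `∏_{j=0}^{l} σ j = 1`
then `μ_l < x` for every `x ∈ C` and if `∏_{j=0}^{l} σ j = -1` then `x < μ_l` for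
every `x ∈ C`. -/
theorem mu_lt_or_gt_of_subset_D (r : ℕ) (Θ σ : ℕ → ℝ)
    (hσ : ∀ i, i ≤ r → σ i = 1 ∨ σ i = -1)
    (C : Set ℝ) (hC : C.Nonempty) (hCD : C ⊆ DIter Θ σ (r + 1))
    (l : ℕ) (hl : l ≤ r) :
    ((∏ j ∈ Finset.range (l + 1), σ j) = 1 → ∀ x ∈ C, mu Θ σ l < x) ∧
    ((∏ j ∈ Finset.range (l + 1), σ j) = -1 → ∀ x ∈ C, x < mu Θ σ l) := by
  have hmu : mu Θ σ l = Θ 0 + σ 0 * Eaux Θ σ l l := by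
    have := muAux_eq Θ σ l l
    rw [Nat.sub_self] at this
    exact this
  constructor
  · intro h x hxC
    have hkey := (key r Θ σ hσ x (hCD hxC) l hl l le_rfl).1
    rw [Nat.sub_self, Finset.range_eq_Ico] at *
    have := hkey h
    simp only [gIter] at this
    rw [hmu]; linarith
  · intro h x hxC
    have hkey := (key r Θ σ hσ x (hCD hxC) l hl l le_rfl).2
    rw [Nat.sub_self, Finset.range_eq_Ico] at *
    have := hkey h
    simp only [gIter] at this
    rw [hmu]; linarith
end

section
/- For all l, k ∈ {0,…,r} with l < k: if ∏_{j=0}^{l} σ_j = 1 then μ_l < μ_k, and if ∏_{j=0}^{l} σ_j = −1 then μ_k < μ_l; in particular μ_l ≠ μ_k. (Proposition 5.6(3) of the paper for a fixed value of the parameter t.) -/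
lemma prod_pm {S : Finset ℕ} {f : ℕ → ℝ} (h : ∀ i ∈ S, f i = 1 ∨ f i = -1) :
    (∏ i ∈ S, f i) = 1 ∨ (∏ i ∈ S, f i) = -1 := by
  refine Finset.prod_induction f (fun x => x = 1 ∨ x = -1) ?_ (Or.inl rfl) h
  rintro a b (rfl | rfl) (rfl | rfl) <;> norm_num

lemma muAux_key (r : ℕ) (Θ σ : ℕ → ℝ)
    (hσ : ∀ i, i ≤ r → σ i = 1 ∨ σ i = -1)
    (l k : ℕ) (hlk : l < k) (hk : k ≤ r) :
    ∀ j, j ≤ l →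
      ((∏ i ∈ Finset.Ico (l - j) (l + 1), σ i) = 1 →
        muAux Θ σ l j < muAux Θ σ k (j + (k - l))) ∧
      ((∏ i ∈ Finset.Ico (l - j) (l + 1), σ i) = -1 →
        muAux Θ σ k (j + (k - l)) < muAux Θ σ l j) := by
  intro j
  induction j with
  | zero =>
    intro _
    obtain ⟨m, hm⟩ : ∃ m, k - l = m + 1 := ⟨k - l - 1, by omega⟩
    have hkl : k - (m + 1) = l := by omega
    have hB : muAux Θ σ k (0 + (k - l)) =
        Θ l + σ l * Real.exp (muAux Θ σ k m) := by
      rw [Nat.zero_add, hm]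
      show Θ (k - (m + 1)) + σ (k - (m + 1)) * Real.exp (muAux Θ σ k m) = _
      rw [hkl]
    have hprod : (∏ i ∈ Finset.Ico (l - 0) (l + 1), σ i) = σ l := by
      simp
    have hA : muAux Θ σ l 0 = Θ l := rfl
    have he := Real.exp_pos (muAux Θ σ k m)
    rw [hprod, hB, hA]
    constructor
    · intro h1; rw [h1]; linarith
    · intro h1; rw [h1]; linarith
  | succ j ih =>
    intro hj1
    have hj : j ≤ l := by omega
    obtain ⟨IH1, IH2⟩ := ih hj
    have ha : (l - (j + 1)) + 1 = l - j := by omega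
    have hlt : l - (j + 1) < l + 1 := by omega
    have hsplit : (∏ i ∈ Finset.Ico (l - (j + 1)) (l + 1), σ i) =
        σ (l - (j + 1)) * ∏ i ∈ Finset.Ico (l - j) (l + 1), σ i := by
      rw [Finset.prod_eq_prod_Ico_succ_bot hlt, ha]
    have hA : muAux Θ σ l (j + 1) =
        Θ (l - (j + 1)) + σ (l - (j + 1)) * Real.exp (muAux Θ σ l j) := rfl
    have hidx : k - ((j + (k - l)) + 1) = l - (j + 1) := by omega
    have hB : muAux Θ σ k ((j + 1) + (k - l)) =
        Θ (l - (j + 1)) + σ (l - (j + 1)) * Real.exp (muAux Θ σ k (j + (k - l))) := by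
      have : (j + 1) + (k - l) = (j + (k - l)) + 1 := by omega
      rw [this]
      show Θ (k - ((j + (k - l)) + 1)) + σ (k - ((j + (k - l)) + 1)) *
        Real.exp (muAux Θ σ k (j + (k - l))) = _
      rw [hidx]
    have hs : (∏ i ∈ Finset.Ico (l - j) (l + 1), σ i) = 1 ∨
        (∏ i ∈ Finset.Ico (l - j) (l + 1), σ i) = -1 := by
      apply prod_pm
      intro i hi
      exact hσ i (by simp [Finset.mem_Ico] at hi; omega)
    have hc : σ (l - (j + 1)) = 1 ∨ σ (l - (j + 1)) = -1 := hσ _ (by omega)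
    rw [hsplit, hA, hB]
    rcases hc with hc | hc <;> rcases hs with hs | hs <;> rw [hc, hs] <;>
      constructor <;> intro h1 <;> first
        | { have := Real.exp_lt_exp.mpr (IH1 hs); nlinarith }
        | { have := Real.exp_lt_exp.mpr (IH2 hs); nlinarith }
        | (exfalso; norm_num at h1)

/-- **Proposition 5.6(3)** (for a fixed value of the parameter `t`): for all
`l, k ∈ {0,…,r}` with `l < k`, if `∏_{j=0}^{l} σ j = 1` then `μ_l < μ_k` and if
`∏_{j=0}^{l} σ j = -1` then `μ_k < μ_l`; in particular `μ_l ≠ μ_k`. -/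
theorem mu_lt_mu_or_mu_gt_mu (r : ℕ) (Θ σ : ℕ → ℝ)
    (hσ : ∀ i, i ≤ r → σ i = 1 ∨ σ i = -1)
    (l k : ℕ) (hlk : l < k) (hk : k ≤ r) :
    ((∏ j ∈ Finset.range (l + 1), σ j) = 1 → mu Θ σ l < mu Θ σ k) ∧
    ((∏ j ∈ Finset.range (l + 1), σ j) = -1 → mu Θ σ k < mu Θ σ l) ∧
    mu Θ σ l ≠ mu Θ σ k := by
  obtain ⟨H1, H2⟩ := muAux_key r Θ σ hσ l k hlk hk l le_rfl
  have hll : l - l = 0 := by omega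
  have hkk : l + (k - l) = k := by omega
  have hrange : (∏ i ∈ Finset.Ico (l - l) (l + 1), σ i) =
      ∏ j ∈ Finset.range (l + 1), σ j := by
    rw [hll, Finset.range_eq_Ico]
  rw [hrange, hkk] at H1 H2
  have hprod : (∏ j ∈ Finset.range (l + 1), σ j) = 1 ∨
      (∏ j ∈ Finset.range (l + 1), σ j) = -1 := by
    apply prod_pm
    intro i hi
    exact hσ i (by simp [Finset.mem_range] at hi; omega)
  refine ⟨H1, H2, ?_⟩
  rcases hprod with h | h
  · exact ne_of_lt (H1 h)
  · exact (ne_of_lt (H2 h)).symm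
end

section
/- Assume D ≠ ∅ and set k := k^{ch}. Then: (1) if ∏_{j=0}^{r} σ_j = 1 and k < 0 then D = {x ∈ ℝ : x > μ_r}; (2) if ∏_{j=0}^{r} σ_j = −1 and k < 0 then D = {x ∈ ℝ : x < μ_r}; (3) if ∏_{j=0}^{r} σ_j = 1 and k ≥ 0 then D = {x ∈ ℝ : μ_r < x < μ_k}; (4) if ∏_{j=0}^{r} σ_j = −1 and k ≥ 0 then D = {x ∈ ℝ : μ_k < x < μ_r}. (Remark 5.9 of the paper for a fixed value of the parameter t.) -/
open Classical in
/-- The change index `k^{ch}`: `max {l ∈ {0,…,r} : σ l = -1} - 1` if such `l` exists,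
and `-2` otherwise. -/
noncomputable def kch (σ : ℕ → ℝ) (r : ℕ) : ℤ :=
  if ∃ l, l ≤ r ∧ σ l = -1 then ((sSup {l : ℕ | l ≤ r ∧ σ l = -1} : ℕ) : ℤ) - 1 else -2

namespace Rem59

variable (Θ σ : ℕ → ℝ) (r : ℕ)

lemma pr_pm (hσ : ∀ i, i ≤ r → σ i = 1 ∨ σ i = -1) :
    ∀ l, l ≤ r + 1 → (∏ j ∈ Finset.range l, σ j) = 1 ∨ (∏ j ∈ Finset.range l, σ j) = -1 := by
  intro l
  induction l with
  | zero => intro _; left; simp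
  | succ l ih =>
    intro hl
    rw [Finset.prod_range_succ]
    rcases ih (by omega) with h | h <;> rcases hσ l (by omega) with h' | h' <;>
      rw [h, h'] <;> norm_num

lemma mu_spec (hσ : ∀ i, i ≤ r → σ i = 1 ∨ σ i = -1) (m : ℕ) (hm : m ≤ r) :
    ∀ l, l ≤ m → mu Θ σ m ∈ DIter Θ σ l ∧
      gIter Θ σ l (mu Θ σ m) =
        if l = m then 0 else σ l * Real.exp (muAux Θ σ m (m - l - 1)) := by
  intro l
  induction l with
  | zero =>
    intro _
    refine ⟨by simp [DIter], ?_⟩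
    cases m with
    | zero => simp [gIter, mu, muAux]
    | succ n =>
      rw [if_neg (by omega)]
      show mu Θ σ (n+1) - Θ 0 = _
      have : mu Θ σ (n+1) = Θ ((n+1) - (n+1)) + σ ((n+1) - (n+1)) * Real.exp (muAux Θ σ (n+1) n) := rfl
      simp only [Nat.sub_self] at this
      rw [this]
      have : n + 1 - 0 - 1 = n := by omega
      rw [this]
      ring
  | succ l ih =>
    intro hl
    have hlm : l < m := by omega
    obtain ⟨hmem, hg⟩ := ih (by omega)
    rw [if_neg (by omega)] at hg
    have hσl := hσ l (by omega)
    have hpos : 0 < σ l * gIter Θ σ l (mu Θ σ m) := by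
      rw [hg]
      have := Real.exp_pos (muAux Θ σ m (m - l - 1))
      rcases hσl with h | h <;> rw [h] <;> nlinarith
    refine ⟨⟨hmem, hpos⟩, ?_⟩
    show Real.log (σ l * gIter Θ σ l (mu Θ σ m)) - Θ (l + 1) = _
    have hsq : σ l * gIter Θ σ l (mu Θ σ m) = Real.exp (muAux Θ σ m (m - l - 1)) := by
      rw [hg]; rcases hσl with h | h <;> rw [h] <;> ring
    rw [hsq, Real.log_exp]
    by_cases hc : l + 1 = m
    · rw [if_pos hc]
      have h0 : m - l - 1 = 0 := by omega
      rw [h0]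
      show muAux Θ σ m 0 - Θ (l+1) = 0
      rw [show muAux Θ σ m 0 = Θ m from rfl, ← hc]
      ring
    · rw [if_neg hc]
      have h1 : m - l - 1 = (m - l - 2) + 1 := by omega
      rw [h1]
      show Θ (m - (m - l - 2 + 1)) + σ (m - (m - l - 2 + 1)) * Real.exp (muAux Θ σ m (m - l - 2)) - Θ (l+1) = _
      have h2 : m - (m - l - 2 + 1) = l + 1 := by omega
      have h3 : m - (l + 1) - 1 = m - l - 2 := by omega
      rw [h2, h3]
      ring

lemma g_strictMono (hσ : ∀ i, i ≤ r → σ i = 1 ∨ σ i = -1) :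
    ∀ l, l ≤ r + 1 → ∀ x ∈ DIter Θ σ l, ∀ y ∈ DIter Θ σ l, x < y →
      (∏ j ∈ Finset.range l, σ j) * gIter Θ σ l x
        < (∏ j ∈ Finset.range l, σ j) * gIter Θ σ l y := by
  intro l
  induction l with
  | zero =>
    intro _ x _ y _ hxy
    simp only [Finset.range_zero, Finset.prod_empty, one_mul]
    show x - Θ 0 < y - Θ 0
    linarith
  | succ l ih =>
    intro hl x hx y hy hxy
    obtain ⟨hx1, hx2⟩ := hx
    obtain ⟨hy1, hy2⟩ := hy
    have IH := ih (by omega) x hx1 y hy1 hxy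
    have hσl := hσ l (by omega)
    have hεl := pr_pm σ r hσ l (by omega)
    rw [Finset.prod_range_succ]
    show _ * (Real.log (σ l * gIter Θ σ l x) - Θ (l+1))
        < _ * (Real.log (σ l * gIter Θ σ l y) - Θ (l+1))
    have hlog : σ l * gIter Θ σ l x < σ l * gIter Θ σ l y →
        Real.log (σ l * gIter Θ σ l x) < Real.log (σ l * gIter Θ σ l y) :=
      fun h => Real.log_lt_log hx2 h
    have hlog' : σ l * gIter Θ σ l y < σ l * gIter Θ σ l x →
        Real.log (σ l * gIter Θ σ l y) < Real.log (σ l * gIter Θ σ l x) :=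
      fun h => Real.log_lt_log hy2 h
    rcases hσl with h | h <;> rcases hεl with h' | h' <;>
        rw [h] at hx2 hy2 ⊢ <;> rw [h'] at IH ⊢
    · have key : Real.log (1 * gIter Θ σ l x) < Real.log (1 * gIter Θ σ l y) :=
        Real.log_lt_log (by linarith) (by linarith)
      linarith
    · have key : Real.log (1 * gIter Θ σ l y) < Real.log (1 * gIter Θ σ l x) :=
        Real.log_lt_log (by linarith) (by linarith)
      linarith
    · have key : Real.log (-1 * gIter Θ σ l y) < Real.log (-1 * gIter Θ σ l x) :=
        Real.log_lt_log (by linarith) (by linarith)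
      linarith
    · have key : Real.log (-1 * gIter Θ σ l x) < Real.log (-1 * gIter Θ σ l y) :=
        Real.log_lt_log (by linarith) (by linarith)
      linarith

lemma sign_iff (hσ : ∀ i, i ≤ r → σ i = 1 ∨ σ i = -1) (n : ℕ) (hn : n ≤ r)
    (x : ℝ) (hx : x ∈ DIter Θ σ n) :
    0 < σ n * gIter Θ σ n x ↔
      0 < (∏ j ∈ Finset.range (n + 1), σ j) * (x - mu Θ σ n) := by
  obtain ⟨hμmem, hμg⟩ := mu_spec Θ σ r hσ n hn n le_rfl
  rw [if_pos rfl] at hμg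
  have hεn := pr_pm σ r hσ n (by omega)
  have hσn := hσ n hn
  have mono := g_strictMono Θ σ r hσ n (by omega)
  have hpos : mu Θ σ n < x →
      0 < (∏ j ∈ Finset.range n, σ j) * gIter Θ σ n x := by
    intro h
    have := mono (mu Θ σ n) hμmem x hx h
    rw [hμg, mul_zero] at this
    exact this
  have hneg : x < mu Θ σ n →
      (∏ j ∈ Finset.range n, σ j) * gIter Θ σ n x < 0 := by
    intro h
    have := mono x hx (mu Θ σ n) hμmem h
    rw [hμg, mul_zero] at this
    exact this
  have heq : x = mu Θ σ n → gIter Θ σ n x = 0 := fun h => h ▸ hμg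
  rw [Finset.prod_range_succ]
  rcases lt_trichotomy x (mu Θ σ n) with ht | ht | ht
  · have h1 := hneg ht
    rcases hσn with h | h <;> rcases hεn with h' | h' <;> rw [h] <;> rw [h'] at h1 ⊢ <;>
      constructor <;> intro h2 <;> nlinarith
  · have h1 := heq ht
    rw [h1, mul_zero]
    rcases hσn with h | h <;> rcases hεn with h' | h' <;> rw [h'] <;>
      constructor <;> intro h2 <;> nlinarith
  · have h1 := hpos ht
    rcases hσn with h | h <;> rcases hεn with h' | h' <;> rw [h] <;> rw [h'] at h1 ⊢ <;>
      constructor <;> intro h2 <;> nlinarith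

lemma mem_iff (hσ : ∀ i, i ≤ r → σ i = 1 ∨ σ i = -1) :
    ∀ n, n ≤ r + 1 → ∀ x, (x ∈ DIter Θ σ n ↔
      ∀ l, l < n → 0 < (∏ j ∈ Finset.range (l + 1), σ j) * (x - mu Θ σ l)) := by
  intro n
  induction n with
  | zero => intro _ x; simp [DIter]
  | succ n ih =>
    intro hn x
    constructor
    · rintro ⟨h1, h2⟩ l hl
      rcases Nat.lt_or_ge l n with h | h
      · exact (ih (by omega) x).mp h1 l h
      · have hln : l = n := by omega
        subst hln
        exact (sign_iff Θ σ r hσ l (by omega) x h1).mp h2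
    · intro h
      have h1 : x ∈ DIter Θ σ n := (ih (by omega) x).mpr (fun l hl => h l (by omega))
      exact ⟨h1, (sign_iff Θ σ r hσ n (by omega) x h1).mpr (h n (by omega))⟩

lemma mu_order (hσ : ∀ i, i ≤ r → σ i = 1 ∨ σ i = -1) (l m : ℕ)
    (hlm : l < m) (hm : m ≤ r) :
    0 < (∏ j ∈ Finset.range (l + 1), σ j) * (mu Θ σ m - mu Θ σ l) := by
  obtain ⟨hmem, hg⟩ := mu_spec Θ σ r hσ m hm l (by omega)
  rw [if_neg (by omega)] at hg
  have hpos : 0 < σ l * gIter Θ σ l (mu Θ σ m) := by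
    rw [hg]
    have := Real.exp_pos (muAux Θ σ m (m - l - 1))
    rcases hσ l (by omega) with h | h <;> rw [h] <;> nlinarith
  exact (sign_iff Θ σ r hσ l (by omega) _ hmem).mp hpos

lemma pr_eq (a : ℕ) (h : ∀ j, a < j → j ≤ r → σ j = 1) :
    ∀ b, a ≤ b → b ≤ r →
      (∏ j ∈ Finset.range (b + 1), σ j) = ∏ j ∈ Finset.range (a + 1), σ j := by
  intro b
  induction b with
  | zero => intro h1 _; interval_cases a; rfl
  | succ b ihb =>
    intro h1 h2
    rcases Nat.eq_or_lt_of_le h1 with h3 | h3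
    · rw [h3]
    · rw [Finset.prod_range_succ, h (b+1) (by omega) h2, mul_one]
      exact ihb (by omega) (by omega)

end Rem59

/-- **Remark 5.9** (for a fixed value of the parameter `t`): assume `D ≠ ∅`
(where `D = DIter Θ σ (r+1)`) and set `k := k^{ch}`. Then:
(1) if `∏_{j=0}^{r} σ j = 1` and `k < 0` then `D = {x : μ_r < x}`;
(2) if `∏_{j=0}^{r} σ j = -1` and `k < 0` then `D = {x : x < μ_r}`;
(3) if `∏_{j=0}^{r} σ j = 1` and `k ≥ 0` then `D = {x : μ_r < x < μ_k}`;
(4) if `∏_{j=0}^{r} σ j = -1` and `k ≥ 0` then `D = {x : μ_k < x < μ_r}`. -/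


theorem DIter_eq_of_kch (r : ℕ) (Θ σ : ℕ → ℝ)
    (hσ : ∀ i, i ≤ r → σ i = 1 ∨ σ i = -1)
    (hD : (DIter Θ σ (r + 1)).Nonempty) :
    ((∏ j ∈ Finset.range (r + 1), σ j) = 1 → kch σ r < 0 →
        DIter Θ σ (r + 1) = {x : ℝ | mu Θ σ r < x}) ∧
    ((∏ j ∈ Finset.range (r + 1), σ j) = -1 → kch σ r < 0 →
        DIter Θ σ (r + 1) = {x : ℝ | x < mu Θ σ r}) ∧
    ((∏ j ∈ Finset.range (r + 1), σ j) = 1 → 0 ≤ kch σ r →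
        DIter Θ σ (r + 1) = {x : ℝ | mu Θ σ r < x ∧ x < mu Θ σ (kch σ r).toNat}) ∧
    ((∏ j ∈ Finset.range (r + 1), σ j) = -1 → 0 ≤ kch σ r →
        DIter Θ σ (r + 1) = {x : ℝ | mu Θ σ (kch σ r).toNat < x ∧ x < mu Θ σ r}) := by
  have hmem := Rem59.mem_iff Θ σ r hσ (r + 1) le_rfl
  have hord := Rem59.mu_order Θ σ r hσ
  have hpm := Rem59.pr_pm σ r hσ
  by_cases hS : ∃ l, l ≤ r ∧ σ l = -1
  · -- there is some -1
    have hbdd : BddAbove {l : ℕ | l ≤ r ∧ σ l = -1} := ⟨r, fun x hx => hx.1⟩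
    have hne : {l : ℕ | l ≤ r ∧ σ l = -1}.Nonempty := by
      obtain ⟨l, h1, h2⟩ := hS; exact ⟨l, h1, h2⟩
    set m := sSup {l : ℕ | l ≤ r ∧ σ l = -1} with hmdef
    have hmemS : m ∈ {l : ℕ | l ≤ r ∧ σ l = -1} := Nat.sSup_mem hne hbdd
    obtain ⟨hm_le, hm_neg⟩ := hmemS
    have hk : kch σ r = (m : ℤ) - 1 := by
      unfold kch
      rw [if_pos hS]
    have hmax : ∀ l, l ≤ r → σ l = -1 → l ≤ m := fun l hl hneg => le_csSup hbdd ⟨hl, hneg⟩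
    have hones : ∀ j, m < j → j ≤ r → σ j = 1 := fun j h1 h2 =>
      (hσ j h2).resolve_right (fun h => absurd (hmax j h2 h) (by omega))
    have htail : ∀ l, m ≤ l → l ≤ r →
        (∏ j ∈ Finset.range (l + 1), σ j) = ∏ j ∈ Finset.range (m + 1), σ j :=
      fun l h1 h2 => Rem59.pr_eq σ r m hones l h1 h2
    have hεm1 : (∏ j ∈ Finset.range (r + 1), σ j) = ∏ j ∈ Finset.range (m + 1), σ j :=
      htail r hm_le le_rfl
    rcases Nat.eq_zero_or_pos m with hm0 | hm1
    · -- m = 0 : all ε_{l+1} = -1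
      have hε1 : (∏ j ∈ Finset.range (m + 1), σ j) = -1 := by
        rw [hm0, Finset.prod_range_one]
        rw [hm0] at hm_neg
        exact hm_neg
      have hconst : ∀ l, l ≤ r → (∏ j ∈ Finset.range (l + 1), σ j) = -1 :=
        fun l hl => by rw [htail l (by omega) hl, hε1]
      refine ⟨?_, ?_, ?_, ?_⟩
      · intro hp _
        exfalso
        rw [hεm1, hε1] at hp
        norm_num at hp
      · intro _ _
        ext x
        simp only [Set.mem_setOf_eq]
        rw [hmem x]
        constructor
        · intro h
          have h1 := h r (by omega)
          rw [hconst r le_rfl] at h1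
          linarith
        · intro h l hl
          rw [hconst l (by omega)]
          rcases Nat.lt_or_ge l r with h2 | h2
          · have h3 := hord l r h2 le_rfl
            rw [hconst l (by omega)] at h3
            linarith
          · have h3 : l = r := by omega
            rw [h3]
            linarith
      · intro _ hk0
        rw [hk, hm0] at hk0
        norm_num at hk0
      · intro _ hk0
        rw [hk, hm0] at hk0
        norm_num at hk0
    · -- m ≥ 1
      have htn : (kch σ r).toNat = m - 1 := by rw [hk]; omega
      have hεsplit : (∏ j ∈ Finset.range (m + 1), σ j)
          = (∏ j ∈ Finset.range m, σ j) * σ m := Finset.prod_range_succ σ m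
      have hidx : m - 1 + 1 = m := by omega
      refine ⟨?_, ?_, ?_, ?_⟩
      · intro _ hkneg
        rw [hk] at hkneg
        omega
      · intro _ hkneg
        rw [hk] at hkneg
        omega
      · intro hp _
        have hPr : (∏ j ∈ Finset.range (m + 1), σ j) = 1 := by rw [← hεm1]; exact hp
        have hPm : (∏ j ∈ Finset.range m, σ j) = -1 := by
          rw [hεsplit, hm_neg] at hPr
          linarith
        ext x
        simp only [Set.mem_setOf_eq, htn]
        rw [hmem x]
        constructor
        · intro h
          have h1 := h r (by omega)
          rw [hp] at h1
          have h2 := h (m - 1) (by omega)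
          rw [hidx, hPm] at h2
          exact ⟨by linarith, by linarith⟩
        · rintro ⟨ha, hb⟩ l hl
          rcases hpm (l + 1) (by omega) with he | he
          · rw [he]
            rcases Nat.lt_or_ge l r with h2 | h2
            · have h3 := hord l r h2 le_rfl
              rw [he] at h3
              linarith
            · have h3 : l = r := by omega
              rw [h3]
              linarith
          · rw [he]
            have hlm : l < m := by
              by_contra hcon
              push_neg at hcon
              rw [htail l hcon (by omega), hPr] at he
              norm_num at he
            rcases Nat.lt_or_ge l (m - 1) with h2 | h2
            · have h3 := hord l (m - 1) h2 (by omega)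
              rw [he] at h3
              linarith
            · have h3 : l = m - 1 := by omega
              rw [h3]
              linarith
      · intro hp _
        have hPr : (∏ j ∈ Finset.range (m + 1), σ j) = -1 := by rw [← hεm1]; exact hp
        have hPm : (∏ j ∈ Finset.range m, σ j) = 1 := by
          rw [hεsplit, hm_neg] at hPr
          linarith
        ext x
        simp only [Set.mem_setOf_eq, htn]
        rw [hmem x]
        constructor
        · intro h
          have h1 := h r (by omega)
          rw [hp] at h1
          have h2 := h (m - 1) (by omega)
          rw [hidx, hPm] at h2
          exact ⟨by linarith, by linarith⟩
        · rintro ⟨ha, hb⟩ l hl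
          rcases hpm (l + 1) (by omega) with he | he
          · rw [he]
            have hlm : l < m := by
              by_contra hcon
              push_neg at hcon
              rw [htail l hcon (by omega), hPr] at he
              norm_num at he
            rcases Nat.lt_or_ge l (m - 1) with h2 | h2
            · have h3 := hord l (m - 1) h2 (by omega)
              rw [he] at h3
              linarith
            · have h3 : l = m - 1 := by omega
              rw [h3]
              linarith
          · rw [he]
            rcases Nat.lt_or_ge l r with h2 | h2
            · have h3 := hord l r h2 le_rfl
              rw [he] at h3
              linarith
            · have h3 : l = r := by omega
              rw [h3]
              linarith
  · -- no -1 at all : kch = -2, all σ = 1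
    have hk : kch σ r = -2 := by unfold kch; rw [if_neg hS]
    have hall : ∀ l, l ≤ r → σ l = 1 :=
      fun l hl => (hσ l hl).resolve_right (fun h => hS ⟨l, hl, h⟩)
    have hprod : ∀ l, l ≤ r → (∏ j ∈ Finset.range (l + 1), σ j) = 1 := by
      intro l hl
      apply Finset.prod_eq_one
      intro j hj
      exact hall j (by simp only [Finset.mem_range] at hj; omega)
    refine ⟨?_, ?_, ?_, ?_⟩
    · intro _ _
      ext x
      simp only [Set.mem_setOf_eq]
      rw [hmem x]
      constructor
      · intro h
        have h1 := h r (by omega)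
        rw [hprod r le_rfl] at h1
        linarith
      · intro h l hl
        rw [hprod l (by omega)]
        rcases Nat.lt_or_ge l r with h2 | h2
        · have h3 := hord l r h2 le_rfl
          rw [hprod l (by omega)] at h3
          linarith
        · have h3 : l = r := by omega
          rw [h3]
          linarith
    · intro hp _
      exfalso
      rw [hprod r le_rfl] at hp
      norm_num at hp
    · intro _ hk0
      rw [hk] at hk0
      norm_num at hk0
    · intro _ hk0
      rw [hk] at hk0
      norm_num at hk0
end

section
/- Assume D ≠ ∅ and set k := k^{ch}. Then H = D ∪ {z ∈ ℂ : Im(z) ≠ 0}, and consequently: (1) if ∏_{j=0}^{r} σ_j = 1 and k < 0 then H = ℂ ∖ {x ∈ ℝ : x ≤ μ_r}; (2) if ∏_{j=0}^{r} σ_j = −1 and k < 0 then H = ℂ ∖ {x ∈ ℝ : x ≥ μ_r}; (3) if ∏_{j=0}^{r} σ_j = 1 and k ≥ 0 then H = ℂ ∖ ({x ∈ ℝ : x ≤ μ_r} ∪ {x ∈ ℝ : x ≥ μ_k}); (4) if ∏_{j=0}^{r} σ_j = −1 and k ≥ 0 then H = ℂ ∖ ({x ∈ ℝ : x ≥ μ_r}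 ∪ {x ∈ ℝ : x ≤ μ_k}). (Remark 5.13 of the paper for a fixed value of the parameter t.) -/
/-- The complex extensions `z_l` of the functions of a logarithmic scale:
`z_0 z = z - Θ 0`, `z_{l+1} z = log (σ l * z_l z) - Θ (l+1)`, with the principal
branch of the complex logarithm. -/
noncomputable def zIter (Θ σ : ℕ → ℝ) : ℕ → ℂ → ℂ
  | 0, z => z - (Θ 0 : ℂ)
  | l + 1, z => Complex.log ((σ l : ℂ) * zIter Θ σ l z) - (Θ (l + 1) : ℂ)

/-- The complex domains `H_l`: `H_0 = ℂ`,
`H_{l+1} = {z ∈ H_l : σ l * z_l z ∈ ℂ⁻}`, where `ℂ⁻ = ℂ ∖ ℝ_{≤0}` is the slit plane.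
Note that the final domain `H` of the paper equals `HIter Θ σ (r+1)`. -/
def HIter (Θ σ : ℕ → ℝ) : ℕ → Set ℂ
  | 0 => Set.univ
  | l + 1 => {z | z ∈ HIter Θ σ l ∧ (σ l : ℂ) * zIter Θ σ l z ∈ Complex.slitPlane}

-- auxiliary lemmas
section Aux
variable (Θ σ : ℕ → ℝ)

/-- sign product -/
noncomputable def eps (σ : ℕ → ℝ) (l : ℕ) : ℝ := ∏ j ∈ Finset.range l, σ j

lemma eps_succ (l : ℕ) : eps σ (l + 1) = eps σ l * σ l := Finset.prod_range_succ _ _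

lemma eps_pm {r : ℕ} (hσ : ∀ i, i ≤ r → σ i = 1 ∨ σ i = -1) :
    ∀ l, l ≤ r + 1 → eps σ l = 1 ∨ eps σ l = -1 := by
  intro l
  induction l with
  | zero => intro _; left; simp [eps]
  | succ n ih =>
    intro h
    rcases ih (by omega) with h1 | h1 <;> rcases hσ n (by omega) with h2 | h2 <;>
      simp [eps_succ, h1, h2]

lemma mu_spec {r : ℕ} (hσ : ∀ i, i ≤ r → σ i = 1 ∨ σ i = -1) (l : ℕ) (hl : l ≤ r) :
    ∀ i, i ≤ l → mu Θ σ l ∈ DIter Θ σ i ∧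
      gIter Θ σ i (mu Θ σ l) = muAux Θ σ l (l - i) - Θ i := by
  intro i
  induction i with
  | zero =>
    intro _
    exact ⟨trivial, by simp [gIter, mu]⟩
  | succ n ih =>
    intro h
    obtain ⟨hmem, heq⟩ := ih (by omega)
    have hln : l - n = (l - (n + 1)) + 1 := by omega
    have hmuAux : muAux Θ σ l (l - n) = Θ n + σ n * Real.exp (muAux Θ σ l (l - (n+1))) := by
      have h1 : l - ((l - (n+1)) + 1) = n := by omega
      rw [hln, muAux, h1]
    have hg : gIter Θ σ n (mu Θ σ l) = σ n * Real.exp (muAux Θ σ l (l - (n+1))) := by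
      rw [heq, hmuAux]; ring
    have hσn : σ n * σ n = 1 := by
      rcases hσ n (by omega) with h1 | h1 <;> rw [h1] <;> norm_num
    have hpos : 0 < σ n * gIter Θ σ n (mu Θ σ l) := by
      rw [hg, ← mul_assoc, hσn, one_mul]; exact Real.exp_pos _
    refine ⟨⟨hmem, hpos⟩, ?_⟩
    have : σ n * gIter Θ σ n (mu Θ σ l) = Real.exp (muAux Θ σ l (l - (n+1))) := by
      rw [hg, ← mul_assoc, hσn, one_mul]
    rw [gIter, this, Real.log_exp]

lemma mu_mem {r : ℕ} (hσ : ∀ i, i ≤ r → σ i = 1 ∨ σ i = -1) (l : ℕ) (hl : l ≤ r) :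
    mu Θ σ l ∈ DIter Θ σ l :=
  (mu_spec Θ σ hσ l hl l le_rfl).1

lemma gIter_mu_self {r : ℕ} (hσ : ∀ i, i ≤ r → σ i = 1 ∨ σ i = -1) (l : ℕ) (hl : l ≤ r) :
    gIter Θ σ l (mu Θ σ l) = 0 := by
  have := (mu_spec Θ σ hσ l hl l le_rfl).2
  simpa [muAux] using this

end Aux
section Aux2
variable (Θ σ : ℕ → ℝ)

lemma gIter_mono {r : ℕ} (hσ : ∀ i, i ≤ r → σ i = 1 ∨ σ i = -1) :
    ∀ l, l ≤ r + 1 → ∀ x ∈ DIter Θ σ l, ∀ y ∈ DIter Θ σ l, x < y →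
      eps σ l * gIter Θ σ l x < eps σ l * gIter Θ σ l y := by
  intro l
  induction l with
  | zero => intro _ x _ y _ hxy; simpa [eps, gIter] using hxy
  | succ n ih =>
    intro hn x hx y hy hxy
    obtain ⟨hx1, hx2⟩ := hx
    obtain ⟨hy1, hy2⟩ := hy
    have hrec := ih (by omega) x hx1 y hy1 hxy
    have hee : eps σ (n+1) = eps σ n * σ n := eps_succ σ n
    have hsx : σ n * gIter Θ σ n x = eps σ (n+1) * (eps σ n * gIter Θ σ n x) := by
      rw [hee]
      rcases eps_pm σ hσ n (by omega) with h | h <;> rw [h] <;> ring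
    have hsy : σ n * gIter Θ σ n y = eps σ (n+1) * (eps σ n * gIter Θ σ n y) := by
      rw [hee]
      rcases eps_pm σ hσ n (by omega) with h | h <;> rw [h] <;> ring
    have hlog : ∀ u v : ℝ, 0 < eps σ (n+1) * u → 0 < eps σ (n+1) * v → u < v →
        eps σ (n+1) * Real.log (eps σ (n+1) * u) < eps σ (n+1) * Real.log (eps σ (n+1) * v) := by
      intro u v hu hv huv
      rcases eps_pm σ hσ (n+1) (by omega) with h | h <;> rw [h] at hu hv ⊢
      · simp only [one_mul] at *
        exact Real.log_lt_log hu huv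
      · rw [show (-1:ℝ)*u = -u by ring] at hu ⊢
        rw [show (-1:ℝ)*v = -v by ring] at hv ⊢
        have := Real.log_lt_log hv (by linarith : -v < -u)
        linarith
    have hx2' : 0 < eps σ (n+1) * (eps σ n * gIter Θ σ n x) := by rw [← hsx]; exact hx2
    have hy2' : 0 < eps σ (n+1) * (eps σ n * gIter Θ σ n y) := by rw [← hsy]; exact hy2
    have := hlog _ _ hx2' hy2' hrec
    rw [← hsx, ← hsy] at this
    show eps σ (n+1) * (Real.log (σ n * gIter Θ σ n x) - Θ (n+1)) <
      eps σ (n+1) * (Real.log (σ n * gIter Θ σ n y) - Θ (n+1))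
    nlinarith [this]

lemma DIter_eq {r : ℕ} (hσ : ∀ i, i ≤ r → σ i = 1 ∨ σ i = -1) :
    ∀ l, l ≤ r + 1 → DIter Θ σ l =
      {x | ∀ i, i < l → 0 < eps σ (i+1) * (x - mu Θ σ i)} := by
  intro l
  induction l with
  | zero => intro _; ext x; simp [DIter]
  | succ n ih =>
    intro hn
    ext x
    have hDn := ih (by omega)
    constructor
    · rintro ⟨hx1, hx2⟩
      intro i hi
      rcases Nat.lt_or_ge i n with h | h
      · exact (hDn ▸ hx1) i h
      · have hin : i = n := by omega
        subst hin
        -- compare x with mu i using monotonicity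
        have hmu : mu Θ σ i ∈ DIter Θ σ i := mu_mem Θ σ hσ i (by omega)
        have hg0 : gIter Θ σ i (mu Θ σ i) = 0 := gIter_mu_self Θ σ hσ i (by omega)
        have hsx : σ i * gIter Θ σ i x = eps σ (i+1) * (eps σ i * gIter Θ σ i x) := by
          rw [eps_succ]
          rcases eps_pm σ hσ i (by omega) with h | h <;> rw [h] <;> ring
        rcases lt_trichotomy x (mu Θ σ i) with hc | hc | hc
        · have := gIter_mono Θ σ hσ i (by omega) x hx1 _ hmu hc
          rw [hg0, mul_zero] at this
          rw [hsx] at hx2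
          rcases eps_pm σ hσ (i+1) (by omega) with h | h <;> rw [h] at hx2 ⊢ <;> nlinarith
        · rw [hc, hg0, mul_zero] at hx2; linarith
        · rcases eps_pm σ hσ (i+1) (by omega) with h | h
          · rw [h]; nlinarith
          · exfalso
            have := gIter_mono Θ σ hσ i (by omega) _ hmu x hx1 hc
            rw [hg0, mul_zero] at this
            rw [hsx, h] at hx2; nlinarith
    · intro hx
      have hx1 : x ∈ DIter Θ σ n := by
        rw [hDn]; intro i hi; exact hx i (by omega)
      refine ⟨hx1, ?_⟩
      have hmu : mu Θ σ n ∈ DIter Θ σ n := mu_mem Θ σ hσ n (by omega)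
      have hg0 : gIter Θ σ n (mu Θ σ n) = 0 := gIter_mu_self Θ σ hσ n (by omega)
      have hsx : σ n * gIter Θ σ n x = eps σ (n+1) * (eps σ n * gIter Θ σ n x) := by
        rw [eps_succ]
        rcases eps_pm σ hσ n (by omega) with h | h <;> rw [h] <;> ring
      have hn' := hx n (by omega)
      rw [hsx]
      rcases eps_pm σ hσ (n+1) (by omega) with h | h <;> rw [h] at hn' ⊢
      · have hc : mu Θ σ n < x := by linarith
        have := gIter_mono Θ σ hσ n (by omega) _ hmu x hx1 hc
        rw [hg0, mul_zero] at this
        nlinarith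
      · have hc : x < mu Θ σ n := by nlinarith
        have := gIter_mono Θ σ hσ n (by omega) x hx1 _ hmu hc
        rw [hg0, mul_zero] at this
        nlinarith

end Aux2
section Aux3
variable (Θ σ : ℕ → ℝ)

lemma HIter_of_im_ne {r : ℕ} (hσ : ∀ i, i ≤ r → σ i = 1 ∨ σ i = -1)
    {z : ℂ} (hz : z.im ≠ 0) :
    ∀ l, l ≤ r + 1 → z ∈ HIter Θ σ l ∧ (zIter Θ σ l z).im ≠ 0 := by
  intro l
  induction l with
  | zero =>
    intro _
    refine ⟨trivial, ?_⟩
    show (z - (Θ 0 : ℂ)).im ≠ 0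
    simpa using hz
  | succ n ih =>
    intro hn
    obtain ⟨h1, h2⟩ := ih (by omega)
    have hσn : (σ n : ℝ) ≠ 0 := by
      rcases hσ n (by omega) with h | h <;> rw [h] <;> norm_num
    have him : ((σ n : ℂ) * zIter Θ σ n z).im ≠ 0 := by
      rw [show ((σ n : ℂ) * zIter Θ σ n z).im = σ n * (zIter Θ σ n z).im by
        simp [Complex.mul_im]]
      exact mul_ne_zero hσn h2
    have hslit : (σ n : ℂ) * zIter Θ σ n z ∈ Complex.slitPlane :=
      Complex.mem_slitPlane_iff.mpr (Or.inr him)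
    refine ⟨⟨h1, hslit⟩, ?_⟩
    show (Complex.log ((σ n : ℂ) * zIter Θ σ n z) - (Θ (n+1) : ℂ)).im ≠ 0
    rw [Complex.sub_im, Complex.ofReal_im, sub_zero, Complex.log_im]
    intro h
    rw [Complex.arg_eq_zero_iff] at h
    exact him h.2

lemma HIter_real {r : ℕ} (hσ : ∀ i, i ≤ r → σ i = 1 ∨ σ i = -1) (x : ℝ) :
    ∀ l, l ≤ r + 1 → (((x : ℂ) ∈ HIter Θ σ l ↔ x ∈ DIter Θ σ l) ∧
      (x ∈ DIter Θ σ l → zIter Θ σ l (x : ℂ) = (gIter Θ σ l x : ℂ))) := by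
  intro l
  induction l with
  | zero =>
    intro _
    refine ⟨by simp [HIter, DIter], fun _ => ?_⟩
    show (x : ℂ) - (Θ 0 : ℂ) = ((x - Θ 0 : ℝ) : ℂ)
    push_cast; ring
  | succ n ih =>
    intro hn
    obtain ⟨h1, h2⟩ := ih (by omega)
    constructor
    · constructor
      · rintro ⟨ha, hb⟩
        have hxD : x ∈ DIter Θ σ n := h1.mp ha
        rw [h2 hxD] at hb
        have : (σ n : ℂ) * ((gIter Θ σ n x : ℝ) : ℂ) = ((σ n * gIter Θ σ n x : ℝ) : ℂ) := by
          push_cast; ring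
        rw [this, Complex.mem_slitPlane_iff] at hb
        simp only [Complex.ofReal_re, Complex.ofReal_im, ne_eq, not_true_eq_false, or_false] at hb
        exact ⟨hxD, by simpa using hb⟩
      · rintro ⟨ha, hb⟩
        refine ⟨h1.mpr ha, ?_⟩
        rw [h2 ha]
        have : (σ n : ℂ) * ((gIter Θ σ n x : ℝ) : ℂ) = ((σ n * gIter Θ σ n x : ℝ) : ℂ) := by
          push_cast; ring
        rw [this, Complex.mem_slitPlane_iff]
        left; simpa using hb
    · rintro ⟨ha, hb⟩
      show Complex.log ((σ n : ℂ) * zIter Θ σ n (x:ℂ)) - (Θ (n+1) : ℂ)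
        = ((Real.log (σ n * gIter Θ σ n x) - Θ (n+1) : ℝ) : ℂ)
      rw [h2 ha]
      have hc : (σ n : ℂ) * ((gIter Θ σ n x : ℝ) : ℂ) = ((σ n * gIter Θ σ n x : ℝ) : ℂ) := by
        push_cast; ring
      rw [hc, ← Complex.ofReal_log (le_of_lt hb)]
      push_cast; ring

lemma HIter_eq_union {r : ℕ} (hσ : ∀ i, i ≤ r → σ i = 1 ∨ σ i = -1) :
    HIter Θ σ (r+1) = (Complex.ofReal '' DIter Θ σ (r+1)) ∪ {z : ℂ | z.im ≠ 0} := by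
  ext z
  constructor
  · intro hz
    by_cases him : z.im = 0
    · left
      have hz' : z = ((z.re : ℝ) : ℂ) := Complex.ext rfl (by simp [him])
      refine ⟨z.re, ?_, hz'.symm⟩
      exact ((HIter_real Θ σ hσ z.re (r+1) le_rfl).1).mp (hz' ▸ hz)
    · right; exact him
  · rintro (⟨x, hx, rfl⟩ | hz)
    · exact ((HIter_real Θ σ hσ x (r+1) le_rfl).1).mpr hx
    · exact (HIter_of_im_ne Θ σ hσ hz (r+1) le_rfl).1

end Aux3
section Aux4
variable (Θ σ : ℕ → ℝ)

lemma eps_const {a b : ℕ} (h1 : ∀ j, a < j → j ≤ b → σ j = 1) :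
    ∀ l, a ≤ l → l ≤ b → eps σ (l + 1) = eps σ (a + 1) := by
  intro l
  induction l with
  | zero =>
    intro h _
    have ha : a = 0 := by omega
    subst ha
    rfl
  | succ n ih =>
    intro h h'
    by_cases hc : a = n + 1
    · subst hc; rfl
    · have hc' : a ≤ n := by omega
      have h2 : eps σ (n+1) = eps σ (a+1) := ih hc' (by omega)
      rw [eps_succ, h1 (n+1) (by omega) h', mul_one, h2]

lemma kch_neg {r : ℕ} (hσ : ∀ i, i ≤ r → σ i = 1 ∨ σ i = -1) (h : kch σ r < 0) :
    ∀ i, 0 < i → i ≤ r → σ i = 1 := by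
  intro i hi hir
  by_cases hex : ∃ l, l ≤ r ∧ σ l = -1
  · set S : Set ℕ := {l : ℕ | l ≤ r ∧ σ l = -1} with hS
    have hbdd : BddAbove S := ⟨r, fun x hx => hx.1⟩
    have hkch : kch σ r = ((sSup S : ℕ) : ℤ) - 1 := by
      simp only [kch]; rw [if_pos hex]
    rw [hkch] at h
    have hM : (sSup S : ℕ) = 0 := by omega
    rcases hσ i hir with h1 | h1
    · exact h1
    · exfalso
      have : i ∈ S := ⟨hir, h1⟩
      have := le_csSup hbdd this
      omega
  · push_neg at hex
    rcases hσ i hir with h1 | h1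
    · exact h1
    · exact absurd h1 (hex i hir)

lemma kch_nonneg {r : ℕ} (hσ : ∀ i, i ≤ r → σ i = 1 ∨ σ i = -1) (h : 0 ≤ kch σ r) :
    ∃ M, 1 ≤ M ∧ M ≤ r ∧ σ M = -1 ∧ (∀ j, M < j → j ≤ r → σ j = 1) ∧
      kch σ r = (M : ℤ) - 1 := by
  by_cases hex : ∃ l, l ≤ r ∧ σ l = -1
  · set S : Set ℕ := {l : ℕ | l ≤ r ∧ σ l = -1} with hS
    have hbdd : BddAbove S := ⟨r, fun x hx => hx.1⟩
    have hne : S.Nonempty := hex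
    have hmem : sSup S ∈ S := Nat.sSup_mem hne hbdd
    have hkch : kch σ r = ((sSup S : ℕ) : ℤ) - 1 := by
      simp only [kch]; rw [if_pos hex]
    refine ⟨sSup S, ?_, hmem.1, hmem.2, ?_, hkch⟩
    · rw [hkch] at h; omega
    · intro j hj hjr
      rcases hσ j hjr with h1 | h1
      · exact h1
      · exfalso
        have : j ∈ S := ⟨hjr, h1⟩
        have := le_csSup hbdd this
        omega
  · exfalso
    have : kch σ r = -2 := by simp only [kch]; rw [if_neg hex]
    omega

lemma mem_ofReal_image (S : Set ℝ) (z : ℂ) :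
    z ∈ Complex.ofReal '' S ↔ z.im = 0 ∧ z.re ∈ S := by
  constructor
  · rintro ⟨x, hx, rfl⟩; exact ⟨by simp, by simpa using hx⟩
  · rintro ⟨h1, h2⟩
    exact ⟨z.re, h2, Complex.ext (by simp) (by simp [h1])⟩

lemma compl_image (B : Set ℝ) :
    Complex.ofReal '' Bᶜ ∪ {z : ℂ | z.im ≠ 0} = (Complex.ofReal '' B)ᶜ := by
  ext z
  simp only [Set.mem_union, mem_ofReal_image, Set.mem_compl_iff, Set.mem_setOf_eq]
  tauto

lemma cut_one {r : ℕ} (e : ℝ)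
    (hmur : ∀ i, i < r → 0 < eps σ (i+1) * (mu Θ σ r - mu Θ σ i))
    (hconst : ∀ i, i ≤ r → eps σ (i+1) = e) :
    {x : ℝ | ∀ i, i < r + 1 → 0 < eps σ (i+1) * (x - mu Θ σ i)} =
      {x : ℝ | 0 < e * (x - mu Θ σ r)} := by
  ext x
  simp only [Set.mem_setOf_eq]
  constructor
  · intro h
    have := h r (by omega)
    rwa [hconst r le_rfl] at this
  · intro h i hi
    rw [hconst i (by omega)]
    rcases Nat.lt_or_ge i r with hc | hc
    · have h2 := hmur i hc
      rw [hconst i (by omega)] at h2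
      nlinarith
    · have : i = r := by omega
      rw [this]; exact h

lemma cut_two {r k : ℕ} (e : ℝ) (hkr : k < r)
    (hmur : ∀ i, i < r → 0 < eps σ (i+1) * (mu Θ σ r - mu Θ σ i))
    (hmuk : ∀ i, i < k → 0 < eps σ (i+1) * (mu Θ σ k - mu Θ σ i))
    (hk : eps σ (k+1) = -e)
    (hconst : ∀ i, k < i → i ≤ r → eps σ (i+1) = e)
    (hpm : ∀ i, i ≤ r → eps σ (i+1) = e ∨ eps σ (i+1) = -e) :
    {x : ℝ | ∀ i, i < r + 1 → 0 < eps σ (i+1) * (x - mu Θ σ i)} =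
      {x : ℝ | 0 < e * (x - mu Θ σ r) ∧ 0 < -e * (x - mu Θ σ k)} := by
  ext x
  simp only [Set.mem_setOf_eq]
  constructor
  · intro h
    constructor
    · have := h r (by omega)
      rwa [hconst r hkr le_rfl] at this
    · have := h k (by omega)
      rwa [hk] at this
  · rintro ⟨h1, h2⟩ i hi
    rcases Nat.lt_or_ge i k with hc | hc
    · rcases hpm i (by omega) with hp | hp <;> rw [hp]
      · have h3 := hmur i (by omega)
        rw [hp] at h3
        nlinarith
      · have h3 := hmuk i hc
        rw [hp] at h3
        nlinarith
    · rcases Nat.eq_or_lt_of_le hc with hik | hik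
      · rw [← hik, hk]; exact h2
      · rcases Nat.lt_or_ge i r with hir | hir
        · rw [hconst i hik (by omega)]
          have h3 := hmur i hir
          rw [hconst i hik (by omega)] at h3
          nlinarith
        · have : i = r := by omega
          rw [this, hconst r hkr le_rfl]
          exact h1

end Aux4
/-- **Remark 5.13** (for a fixed value of the parameter `t`): assume `D ≠ ∅` and set
`k := k^{ch}`. Then `H = D ∪ {z : Im z ≠ 0}` and consequently:
(1) if `∏_{j=0}^{r} σ j = 1` and `k < 0` then `H = ℂ ∖ {x ∈ ℝ : x ≤ μ_r}`;
(2) if `∏_{j=0}^{r} σ j = -1` and `k < 0` then `H = ℂ ∖ {x ∈ ℝ : x ≥ μ_r}`;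
(3) if `∏_{j=0}^{r} σ j = 1` and `k ≥ 0` then
    `H = ℂ ∖ ({x ∈ ℝ : x ≤ μ_r} ∪ {x ∈ ℝ : x ≥ μ_k})`;
(4) if `∏_{j=0}^{r} σ j = -1` and `k ≥ 0` then
    `H = ℂ ∖ ({x ∈ ℝ : x ≥ μ_r} ∪ {x ∈ ℝ : x ≤ μ_k})`.
Here `D = DIter Θ σ (r+1)` and `H = HIter Θ σ (r+1)`. -/
theorem HIter_eq_of_kch (r : ℕ) (Θ σ : ℕ → ℝ)
    (hσ : ∀ i, i ≤ r → σ i = 1 ∨ σ i = -1)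
    (hD : (DIter Θ σ (r + 1)).Nonempty) :
    HIter Θ σ (r + 1) =
        (Complex.ofReal '' DIter Θ σ (r + 1)) ∪ {z : ℂ | z.im ≠ 0} ∧
    ((∏ j ∈ Finset.range (r + 1), σ j) = 1 → kch σ r < 0 →
        HIter Θ σ (r + 1) = (Complex.ofReal '' {x : ℝ | x ≤ mu Θ σ r})ᶜ) ∧
    ((∏ j ∈ Finset.range (r + 1), σ j) = -1 → kch σ r < 0 →
        HIter Θ σ (r + 1) = (Complex.ofReal '' {x : ℝ | mu Θ σ r ≤ x})ᶜ) ∧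
    ((∏ j ∈ Finset.range (r + 1), σ j) = 1 → 0 ≤ kch σ r →
        HIter Θ σ (r + 1) =
          (Complex.ofReal '' {x : ℝ | x ≤ mu Θ σ r} ∪
            Complex.ofReal '' {x : ℝ | mu Θ σ (kch σ r).toNat ≤ x})ᶜ) ∧
    ((∏ j ∈ Finset.range (r + 1), σ j) = -1 → 0 ≤ kch σ r →
        HIter Θ σ (r + 1) =
          (Complex.ofReal '' {x : ℝ | mu Θ σ r ≤ x} ∪
            Complex.ofReal '' {x : ℝ | x ≤ mu Θ σ (kch σ r).toNat})ᶜ) := by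
  have hmain := HIter_eq_union Θ σ hσ
  have hDchar : DIter Θ σ (r+1) =
      {x | ∀ i, i < r + 1 → 0 < eps σ (i+1) * (x - mu Θ σ i)} :=
    DIter_eq Θ σ hσ (r+1) le_rfl
  have hprod_eps : eps σ (r+1) = ∏ j ∈ Finset.range (r+1), σ j := rfl
  have hmur : ∀ i, i < r → 0 < eps σ (i+1) * (mu Θ σ r - mu Θ σ i) := by
    intro i hi
    have hm : mu Θ σ r ∈ DIter Θ σ r := mu_mem Θ σ hσ r le_rfl
    rw [DIter_eq Θ σ hσ r (by omega)] at hm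
    exact hm i hi
  refine ⟨hmain, ?_, ?_, ?_, ?_⟩
  · -- case 1 : prod = 1, kch < 0
    intro hp hk
    have hseq : ∀ i, 0 < i → i ≤ r → σ i = 1 := kch_neg σ hσ hk
    have hconst0 : ∀ i, i ≤ r → eps σ (i+1) = eps σ (0+1) := fun i hi =>
      eps_const σ (fun j hj hjr => hseq j hj hjr) i (Nat.zero_le i) hi
    have he1 : eps σ (0+1) = 1 := by
      rw [← hconst0 r le_rfl, hprod_eps]; exact hp
    have hconst : ∀ i, i ≤ r → eps σ (i+1) = 1 := fun i hi => (hconst0 i hi).trans he1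
    have hDeq : DIter Θ σ (r+1) = {x : ℝ | x ≤ mu Θ σ r}ᶜ := by
      rw [hDchar, cut_one Θ σ 1 hmur hconst]
      ext x
      simp only [Set.mem_setOf_eq, Set.mem_compl_iff, not_le, one_mul]
      constructor <;> intro h <;> linarith
    rw [hmain, hDeq, compl_image]
  · -- case 2 : prod = -1, kch < 0
    intro hp hk
    have hseq : ∀ i, 0 < i → i ≤ r → σ i = 1 := kch_neg σ hσ hk
    have hconst0 : ∀ i, i ≤ r → eps σ (i+1) = eps σ (0+1) := fun i hi =>
      eps_const σ (fun j hj hjr => hseq j hj hjr) i (Nat.zero_le i) hi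
    have he1 : eps σ (0+1) = -1 := by
      rw [← hconst0 r le_rfl, hprod_eps]; exact hp
    have hconst : ∀ i, i ≤ r → eps σ (i+1) = -1 := fun i hi => (hconst0 i hi).trans he1
    have hDeq : DIter Θ σ (r+1) = {x : ℝ | mu Θ σ r ≤ x}ᶜ := by
      rw [hDchar, cut_one Θ σ (-1) hmur hconst]
      ext x
      simp only [Set.mem_setOf_eq, Set.mem_compl_iff, not_le, neg_one_mul]
      constructor <;> intro h <;> linarith
    rw [hmain, hDeq, compl_image]
  · -- case 3 : prod = 1, kch ≥ 0
    intro hp hk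
    obtain ⟨M, hM1, hMr, hMneg, hMabove, hkch⟩ := kch_nonneg σ hσ hk
    set k := M - 1 with hkdef
    have htn : (kch σ r).toNat = k := by rw [hkch]; omega
    have hk1 : k + 1 = M := by omega
    have hkr : k < r := by omega
    have hconstM : ∀ i, M ≤ i → i ≤ r → eps σ (i+1) = eps σ (M+1) := fun i hi hir =>
      eps_const σ (fun j hj hjr => hMabove j hj hjr) i hi hir
    have heM : eps σ (M+1) = 1 := by
      rw [← hconstM r hMr le_rfl, hprod_eps]; exact hp
    have hkeps : eps σ (k+1) = -1 := by
      have h2 : eps σ (M+1) = eps σ M * σ M := eps_succ σ M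
      rw [heM, hMneg] at h2
      rw [hk1]; linarith
    have hconst : ∀ i, k < i → i ≤ r → eps σ (i+1) = 1 := fun i hi hir => by
      rw [hconstM i (by omega) hir]; exact heM
    have hpm : ∀ i, i ≤ r → eps σ (i+1) = 1 ∨ eps σ (i+1) = -1 := fun i hi =>
      eps_pm σ hσ (i+1) (by omega)
    have hmuk : ∀ i, i < k → 0 < eps σ (i+1) * (mu Θ σ k - mu Θ σ i) := by
      intro i hi
      have hm : mu Θ σ k ∈ DIter Θ σ k := mu_mem Θ σ hσ k (by omega)
      rw [DIter_eq Θ σ hσ k (by omega)] at hm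
      exact hm i hi
    have hDeq : DIter Θ σ (r+1) =
        ({x : ℝ | x ≤ mu Θ σ r} ∪ {x : ℝ | mu Θ σ k ≤ x})ᶜ := by
      rw [hDchar, cut_two Θ σ 1 hkr hmur hmuk (by rw [hkeps]) hconst
        (fun i hi => by rcases hpm i hi with h | h
                        · left; exact h
                        · right; rw [h])]
      ext x
      simp only [Set.mem_setOf_eq, Set.mem_compl_iff, Set.mem_union, not_or, not_le]
      constructor <;> rintro ⟨h1, h2⟩ <;> constructor <;> linarith
    rw [hmain, hDeq, compl_image, Set.image_union, htn]
  · -- case 4 : prod = -1, kch ≥ 0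
    intro hp hk
    obtain ⟨M, hM1, hMr, hMneg, hMabove, hkch⟩ := kch_nonneg σ hσ hk
    set k := M - 1 with hkdef
    have htn : (kch σ r).toNat = k := by rw [hkch]; omega
    have hk1 : k + 1 = M := by omega
    have hkr : k < r := by omega
    have hconstM : ∀ i, M ≤ i → i ≤ r → eps σ (i+1) = eps σ (M+1) := fun i hi hir =>
      eps_const σ (fun j hj hjr => hMabove j hj hjr) i hi hir
    have heM : eps σ (M+1) = -1 := by
      rw [← hconstM r hMr le_rfl, hprod_eps]; exact hp
    have hkeps : eps σ (k+1) = 1 := by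
      have h2 : eps σ (M+1) = eps σ M * σ M := eps_succ σ M
      rw [heM, hMneg] at h2
      rw [hk1]; linarith
    have hconst : ∀ i, k < i → i ≤ r → eps σ (i+1) = -1 := fun i hi hir => by
      rw [hconstM i (by omega) hir]; exact heM
    have hpm : ∀ i, i ≤ r → eps σ (i+1) = -1 ∨ eps σ (i+1) = -(-1) := fun i hi => by
      rcases eps_pm σ hσ (i+1) (by omega) with h | h
      · right; rw [h]; norm_num
      · left; exact h
    have hmuk : ∀ i, i < k → 0 < eps σ (i+1) * (mu Θ σ k - mu Θ σ i) := by
      intro i hi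
      have hm : mu Θ σ k ∈ DIter Θ σ k := mu_mem Θ σ hσ k (by omega)
      rw [DIter_eq Θ σ hσ k (by omega)] at hm
      exact hm i hi
    have hDeq : DIter Θ σ (r+1) =
        ({x : ℝ | mu Θ σ r ≤ x} ∪ {x : ℝ | x ≤ mu Θ σ k})ᶜ := by
      rw [hDchar, cut_two Θ σ (-1) hkr hmur hmuk (by rw [hkeps]; norm_num) hconst hpm]
      ext x
      simp only [Set.mem_setOf_eq, Set.mem_compl_iff, Set.mem_union, not_or, not_le]
      constructor <;> rintro ⟨h1, h2⟩ <;> constructor <;> linarith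
    rw [hmain, hDeq, compl_image, Set.image_union, htn]
end

section
/- For every κ ∈ {0,…,r} and every l ∈ {0,…,κ}: H*_{l,κ} = H_l, and if l < κ then z_l(z) = 𝒫_{l,κ}(z) + σ_l·exp(μ_{κ−l−1,κ}) for every z ∈ H_l. (Proposition 5.18 of the paper for a fixed value of the parameter t.) -/
/-- The functions `𝒫_{l,κ}`: `𝒫_{0,κ} z = z - μ_κ` and
`𝒫_{l+1,κ} z = log (1 + σ l * 𝒫_{l,κ} z / exp (μ_{κ-(l+1),κ}))`. -/
noncomputable def PIter (Θ σ : ℕ → ℝ) (κ : ℕ) : ℕ → ℂ → ℂ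
  | 0, z => z - (mu Θ σ κ : ℂ)
  | l + 1, z =>
      Complex.log (1 + (σ l : ℂ) * PIter Θ σ κ l z / (Real.exp (muAux Θ σ κ (κ - (l + 1))) : ℂ))

/-- The domains `H*_{l,κ}`: `H*_{0,κ} = ℂ` and
`H*_{l+1,κ} = {z ∈ H*_{l,κ} : 1 + σ l * 𝒫_{l,κ} z / exp (μ_{κ-(l+1),κ}) ∈ ℂ⁻}`. -/
def HstarIter (Θ σ : ℕ → ℝ) (κ : ℕ) : ℕ → Set ℂ
  | 0 => Set.univ
  | l + 1 => {z | z ∈ HstarIter Θ σ κ l ∧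
      1 + (σ l : ℂ) * PIter Θ σ κ l z / (Real.exp (muAux Θ σ κ (κ - (l + 1))) : ℂ) ∈
        Complex.slitPlane}


lemma slitPlane_pos_real_mul {c : ℝ} (hc : 0 < c) (w : ℂ) :
    (c : ℂ) * w ∈ Complex.slitPlane ↔ w ∈ Complex.slitPlane := by
  simp only [Complex.mem_slitPlane_iff, Complex.mul_re, Complex.mul_im, Complex.ofReal_re,
    Complex.ofReal_im, zero_mul, sub_zero, add_zero, zero_add]
  constructor
  · rintro (h | h)
    · exact Or.inl (by nlinarith)
    · exact Or.inr fun h' => h (by rw [h', mul_zero])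
  · rintro (h | h)
    · exact Or.inl (by positivity)
    · exact Or.inr (mul_ne_zero hc.ne' h)

/-- **Proposition 5.18** (for a fixed value of the parameter `t`): for every
`κ ∈ {0,…,r}` and every `l ∈ {0,…,κ}`, `H*_{l,κ} = H_l`, and if `l < κ` then
`z_l z = 𝒫_{l,κ} z + σ l * exp (μ_{κ-l-1,κ})` for every `z ∈ H_l`. -/
theorem HstarIter_eq_HIter_and_zIter_eq_PIter_add (r : ℕ) (Θ σ : ℕ → ℝ)
    (hσ : ∀ i, i ≤ r → σ i = 1 ∨ σ i = -1)
    (κ : ℕ) (hκ : κ ≤ r) (l : ℕ) (hl : l ≤ κ) :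
    HstarIter Θ σ κ l = HIter Θ σ l ∧
    (l < κ → ∀ z ∈ HIter Θ σ l,
      zIter Θ σ l z =
        PIter Θ σ κ l z + (σ l : ℂ) * (Real.exp (muAux Θ σ κ (κ - l - 1)) : ℂ)) := by
  induction l with
  | zero =>
    refine ⟨rfl, fun h0 z _ => ?_⟩
    obtain ⟨j, rfl⟩ : ∃ j, κ = j + 1 := ⟨κ - 1, by omega⟩
    simp only [zIter, PIter, mu, muAux, Nat.add_sub_cancel, Nat.sub_self]
    push_cast
    ring
  | succ l ih =>
    have hlκ : l < κ := hl
    obtain ⟨hset, hfun⟩ := ih (le_of_lt hlκ)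
    have hfun := hfun hlκ
    set E : ℂ := (Real.exp (muAux Θ σ κ (κ - l - 1)) : ℂ) with hE
    have hEpos : (0:ℝ) < Real.exp (muAux Θ σ κ (κ - l - 1)) := Real.exp_pos _
    have hEne : E ≠ 0 := by
      simpa [hE] using Complex.ofReal_ne_zero.mpr hEpos.ne'
    have hσl : (σ l : ℂ) * (σ l : ℂ) = 1 := by
      rcases hσ l (by omega) with h | h <;> simp [h]
    have hsub : κ - (l + 1) = κ - l - 1 := by omega
    have key : ∀ z, z ∈ HIter Θ σ l →
        (σ l : ℂ) * zIter Θ σ l z = E * (1 + (σ l : ℂ) * PIter Θ σ κ l z / E) := by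
      intro z hz
      rw [hfun z hz]
      have hsq : (σ l : ℂ) ^ 2 = 1 := by rw [sq, hσl]
      field_simp [hEne]
      ring_nf
      rw [hsq]
      ring
    have hmem : ∀ z, z ∈ HIter Θ σ l →
        ((σ l : ℂ) * zIter Θ σ l z ∈ Complex.slitPlane ↔
          1 + (σ l : ℂ) * PIter Θ σ κ l z / E ∈ Complex.slitPlane) := by
      intro z hz
      rw [key z hz, hE, slitPlane_pos_real_mul hEpos]
    constructor
    · ext z
      simp only [HstarIter, HIter, Set.mem_setOf_eq, hset, hsub, ← hE]
      exact and_congr_right fun hz => (hmem z hz).symm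
    · intro hlt z hz
      obtain ⟨hz1, hz2⟩ := hz
      have hw : 1 + (σ l : ℂ) * PIter Θ σ κ l z / E ∈ Complex.slitPlane :=
        (hmem z hz1).mp hz2
      have hwne : 1 + (σ l : ℂ) * PIter Θ σ κ l z / E ≠ 0 := Complex.slitPlane_ne_zero hw
      simp only [zIter, PIter, hsub, ← hE]
      rw [key z hz1, hE, Complex.log_ofReal_mul hEpos hwne, Real.log_exp]
      have hmu : muAux Θ σ κ (κ - l - 1) =
          Θ (l + 1) + σ (l + 1) * Real.exp (muAux Θ σ κ (κ - l - 1 - 1)) := by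
        have h1 : κ - l - 1 = (κ - l - 2) + 1 := by omega
        have h2 : κ - ((κ - l - 2) + 1) = l + 1 := by omega
        have h3 : κ - l - 1 - 1 = κ - l - 2 := by omega
        rw [h3, h1]
        simp [muAux, h2]
      have hmuC : ((muAux Θ σ κ (κ - l - 1) : ℝ) : ℂ) =
          (Θ (l + 1) : ℂ) +
            (σ (l + 1) : ℂ) * ((Real.exp (muAux Θ σ κ (κ - l - 1 - 1)) : ℝ) : ℂ) := by
        rw [hmu]; push_cast; ring
      rw [hmuC]
      ring
end

section
/- For every κ ∈ {0,…,r} and every z ∈ H_κ (= H*_{κ,κ}) one has z_κ(z) = 𝒫_{κ,κ}(z). (Corollary 5.19 of the paper for a fixed value of the parameter t.) -/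
lemma HIter_mono (Θ σ : ℕ → ℝ) : ∀ {l m : ℕ}, l ≤ m → HIter Θ σ m ⊆ HIter Θ σ l := by
  intro l m h
  induction m with
  | zero => simp_all
  | succ n ih =>
    rcases Nat.eq_or_lt_of_le h with rfl | h'
    · exact subset_rfl
    · exact fun z hz => ih (Nat.lt_succ_iff.mp h') hz.1

lemma zIter_eq_PIter_aux (r : ℕ) (Θ σ : ℕ → ℝ)
    (hσ : ∀ i, i ≤ r → σ i = 1 ∨ σ i = -1)
    (κ : ℕ) (hκ : κ ≤ r) (z : ℂ) (hz : z ∈ HIter Θ σ κ) :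
    ∀ l, l ≤ κ →
      zIter Θ σ l z = PIter Θ σ κ l z + ((muAux Θ σ κ (κ - l) : ℂ) - (Θ l : ℂ)) := by
  intro l
  induction l with
  | zero =>
    intro _
    simp [zIter, PIter, mu, Nat.sub_zero]
  | succ l ih =>
    intro hl
    have hlκ : l ≤ κ := Nat.le_of_succ_le hl
    have hIH := ih hlκ
    set m : ℝ := muAux Θ σ κ (κ - (l + 1)) with hm
    have hsub : κ - l = (κ - (l + 1)) + 1 := by omega
    have hidx : κ - (κ - (l + 1) + 1) = l := by omega
    have hmu : muAux Θ σ κ (κ - l) = Θ l + σ l * Real.exp m := by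
      rw [hsub, muAux, hidx]
    have hσl : (σ l : ℂ) * (σ l : ℂ) = 1 := by
      rcases hσ l (le_trans hlκ hκ) with h | h <;> rw [h] <;> norm_num
    have hzl : (σ l : ℂ) * zIter Θ σ l z =
        (Real.exp m : ℂ) * (1 + (σ l : ℂ) * PIter Θ σ κ l z / (Real.exp m : ℂ)) := by
      have hexp : (Real.exp m : ℂ) ≠ 0 := by
        exact_mod_cast (Real.exp_pos m).ne'
      field_simp
      rw [hIH, hmu]
      push_cast
      ring_nf
      rw [sq, hσl, one_mul]
    have hslit : (σ l : ℂ) * zIter Θ σ l z ∈ Complex.slitPlane :=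
      (HIter_mono Θ σ hl hz).2
    have hne : 1 + (σ l : ℂ) * PIter Θ σ κ l z / (Real.exp m : ℂ) ≠ 0 := by
      intro h0
      apply Complex.slitPlane_ne_zero hslit
      rw [hzl, h0, mul_zero]
    show Complex.log ((σ l : ℂ) * zIter Θ σ l z) - (Θ (l + 1) : ℂ) = _
    rw [hzl, Complex.log_ofReal_mul (Real.exp_pos m) hne, Real.log_exp]
    show _ = PIter Θ σ κ (l + 1) z + _
    rw [PIter]
    ring

/-- **Corollary 5.19** (for a fixed value of the parameter `t`): for every
`κ ∈ {0,…,r}` and every `z ∈ H_κ (= H*_{κ,κ})`, one has `z_κ z = 𝒫_{κ,κ} z`. -/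
theorem zIter_eq_PIter (r : ℕ) (Θ σ : ℕ → ℝ)
    (hσ : ∀ i, i ≤ r → σ i = 1 ∨ σ i = -1)
    (κ : ℕ) (hκ : κ ≤ r) (z : ℂ) (hz : z ∈ HIter Θ σ κ) :
    zIter Θ σ κ z = PIter Θ σ κ κ z := by
  have h := zIter_eq_PIter_aux r Θ σ hσ κ hκ z hz κ le_rfl
  simpa [muAux, Nat.sub_self] using h
end

section
/- Let κ = r, or assume k^{ch} ≥ 0 and let κ ∈ {k^{ch}, r}. Then for every l ∈ {0,…,κ}: the function 𝒫_{l,κ}, restricted to H (note H ⊆ H_l = H*_{l,κ}), is holomorphic on H; for every z ∈ H one has (∏_{j=l}^{κ} σ_j)·𝒫_{l,κ}(z) ∈ ℂ⁻; and if moreover z ∈ H ∩ ℝ then (∏_{j=l}^{κ} σ_j)·𝒫_{l,κ}(z) is a positive real number. (Remark 5.21 of the paper for a fixed value of the parameter t.) -/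
/-! The key identity is `𝒫_{l,κ} = z_l + Θ_l - μ_{κ-l,κ}` on `H_l`; for `l < κ` it reads
`𝒫_{l,κ} = z_l - σ_l e^m` with `m = μ_{κ-l-1,κ}`, so that `𝒫_{l+1,κ} = log v` and
`σ_l 𝒫_{l,κ} = e^m (v - 1)` for `v = σ_l z_l / e^m ∈ ℂ⁻`. For real `ε ≠ 0`,
`ε log v ∈ ℂ⁻ ↔ ε (v - 1) ∈ ℂ⁻`: both are non-real exactly when `v` is, and for `v > 0` the
numbers `log v` and `v - 1` have the same sign. So the slit-plane property of the signed
products propagates downwards from `σ_κ 𝒫_{κ,κ} = σ_κ z_κ ∈ ℂ⁻`. -/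

open Finset
open Complex (slitPlane mem_slitPlane_iff)

theorem Complex.ofReal_mul_mem_slitPlane_iff {c : ℝ} (hc : 0 < c) {z : ℂ} :
    (c : ℂ) * z ∈ slitPlane ↔ z ∈ slitPlane := by
  simp only [mem_slitPlane_iff, Complex.re_ofReal_mul, Complex.im_ofReal_mul,
    mul_pos_iff_of_pos_left hc, mul_ne_zero_iff, ne_eq, hc.ne', not_false_eq_true, true_and]

theorem Complex.log_div_ofReal_exp {w : ℂ} (hw : w ≠ 0) (m : ℝ) :
    Complex.log (w / (Real.exp m : ℂ)) = Complex.log w - m := by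
  rw [div_eq_mul_inv, ← Complex.ofReal_inv, ← Real.exp_neg,
    Complex.log_mul_ofReal _ (Real.exp_pos _) _ hw, Real.log_exp]
  push_cast
  ring

theorem Complex.ofReal_mul_log_mem_slitPlane_iff {v : ℂ} (hv : v ∈ slitPlane) {ε : ℝ}
    (hε : ε ≠ 0) : (ε : ℂ) * Complex.log v ∈ slitPlane ↔ (ε : ℂ) * (v - 1) ∈ slitPlane := by
  rcases eq_or_ne v.im 0 with him | him
  · have hx : 0 < v.re := (mem_slitPlane_iff.mp hv).resolve_right (not_not.mpr him)
    have hv_eq : v = (v.re : ℂ) := Complex.ext rfl (by simpa using him)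
    rw [hv_eq, ← Complex.ofReal_log hx.le, ← Complex.ofReal_one, ← Complex.ofReal_sub,
      ← Complex.ofReal_mul, ← Complex.ofReal_mul, Complex.ofReal_mem_slitPlane,
      Complex.ofReal_mem_slitPlane, mul_pos_iff, mul_pos_iff, Real.log_pos_iff hx.le,
      Real.log_neg_iff hx, sub_pos, sub_neg]
  · have harg : v.arg ≠ 0 := fun h ↦ him (Complex.arg_eq_zero_iff.mp h).2
    simp only [mem_slitPlane_iff, Complex.im_ofReal_mul, Complex.log_im, Complex.sub_im,
      Complex.one_im, sub_zero, ne_eq, mul_eq_zero, hε, harg, him, or_self, not_false_eq_true,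
      or_true]

theorem one_add_mul_sub_mul_div {K : Type*} [Field K] {s c : K} (hs : s * s = 1) (hc : c ≠ 0)
    (Z : K) : 1 + s * (Z - s * c) / c = s * Z / c := by
  field_simp
  linear_combination (-c) * hs

theorem kch_lt (σ : ℕ → ℝ) (r : ℕ) : kch σ r < r := by
  unfold kch
  split_ifs with h
  · obtain ⟨l, hl⟩ := h
    have : sSup {l : ℕ | l ≤ r ∧ σ l = -1} ≤ r := csSup_le ⟨l, hl⟩ fun _ ha ↦ ha.1
    omega
  · omega

section

variable {Θ σ : ℕ → ℝ} {κ l : ℕ} {z : ℂ}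

theorem HIter_antitone : Antitone (HIter Θ σ) :=
  antitone_nat_of_succ_le fun _ _ hz ↦ hz.1

theorem differentiableOn_zIter (l : ℕ) : DifferentiableOn ℂ (zIter Θ σ l) (HIter Θ σ l) := by
  induction l with
  | zero => exact differentiableOn_id.sub_const _
  | succ l ih => exact (((ih.mono fun _ hz ↦ hz.1).const_mul _).clog fun _ hz ↦ hz.2).sub_const _

theorem zIter_im_eq_zero (hz : z ∈ HIter Θ σ l) (hzi : z.im = 0) : (zIter Θ σ l z).im = 0 := by
  induction l with
  | zero => simp [zIter, hzi]
  | succ l ih =>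
    have him : ((σ l : ℂ) * zIter Θ σ l z).im = 0 := by simp [ih hz.1]
    have hre : 0 < ((σ l : ℂ) * zIter Θ σ l z).re :=
      (mem_slitPlane_iff.mp hz.2).resolve_right (not_not.mpr him)
    simp [zIter, Complex.log_im, Complex.arg_eq_zero_iff.mpr ⟨hre.le, him⟩]

theorem muAux_self_sub (h : l < κ) :
    muAux Θ σ κ (κ - l) = Θ l + σ l * Real.exp (muAux Θ σ κ (κ - (l + 1))) := by
  rw [show κ - l = κ - (l + 1) + 1 by omega, muAux, show κ - (κ - (l + 1) + 1) = l by omega]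

theorem PIter_eq_zIter_add (hσ : ∀ i < κ, σ i = 1 ∨ σ i = -1) (hl : l ≤ κ)
    (hz : z ∈ HIter Θ σ l) :
    PIter Θ σ κ l z = zIter Θ σ l z + Θ l - muAux Θ σ κ (κ - l) := by
  induction l with
  | zero => simp only [PIter, zIter, mu, Nat.sub_zero]; ring
  | succ l ih =>
    have hσl : (σ l : ℂ) * σ l = 1 := by rcases hσ l hl with h | h <;> simp [h]
    have hP : PIter Θ σ κ l z =
        zIter Θ σ l z - σ l * (Real.exp (muAux Θ σ κ (κ - (l + 1))) : ℂ) := by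
      rw [ih (by omega) hz.1, muAux_self_sub hl]
      push_cast
      ring
    rw [PIter, hP, one_add_mul_sub_mul_div hσl (by exact_mod_cast (Real.exp_pos _).ne'),
      Complex.log_div_ofReal_exp (Complex.slitPlane_ne_zero hz.2), zIter]
    ring

theorem PIter_eq_zIter_sub (hσ : ∀ i < κ, σ i = 1 ∨ σ i = -1) (hl : l < κ)
    (hz : z ∈ HIter Θ σ l) :
    PIter Θ σ κ l z = zIter Θ σ l z - σ l * (Real.exp (muAux Θ σ κ (κ - (l + 1))) : ℂ) := by
  rw [PIter_eq_zIter_add hσ hl.le hz, muAux_self_sub hl]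
  push_cast
  ring

theorem PIter_succ_eq_log (hσ : ∀ i < κ, σ i = 1 ∨ σ i = -1) (hl : l < κ)
    (hz : z ∈ HIter Θ σ (l + 1)) :
    PIter Θ σ κ (l + 1) z =
      Complex.log (σ l * zIter Θ σ l z / (Real.exp (muAux Θ σ κ (κ - (l + 1))) : ℂ)) := by
  rw [PIter_eq_zIter_add hσ hl hz, Complex.log_div_ofReal_exp (Complex.slitPlane_ne_zero hz.2),
    zIter]
  ring

theorem differentiableOn_PIter (hσ : ∀ i < κ, σ i = 1 ∨ σ i = -1) (hl : l ≤ κ) :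
    DifferentiableOn ℂ (PIter Θ σ κ l) (HIter Θ σ l) :=
  (((differentiableOn_zIter l).add_const _).sub_const _).congr
    fun _ hz ↦ PIter_eq_zIter_add hσ hl hz

theorem PIter_im_eq_zero (hσ : ∀ i < κ, σ i = 1 ∨ σ i = -1) (hl : l ≤ κ)
    (hz : z ∈ HIter Θ σ l) (hzi : z.im = 0) : (PIter Θ σ κ l z).im = 0 := by
  simp [PIter_eq_zIter_add hσ hl hz, zIter_im_eq_zero hz hzi]

theorem prod_mul_PIter_mem_slitPlane (hσ : ∀ i ≤ κ, σ i = 1 ∨ σ i = -1) (hl : l ≤ κ)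
    (hz : z ∈ HIter Θ σ (κ + 1)) :
    ((∏ j ∈ Icc l κ, σ j : ℝ) : ℂ) * PIter Θ σ κ l z ∈ slitPlane := by
  have hσ' : ∀ i < κ, σ i = 1 ∨ σ i = -1 := fun i hi ↦ hσ i hi.le
  induction hl using Nat.decreasingInduction with
  | self =>
    have hP : PIter Θ σ κ κ z = zIter Θ σ κ z := by
      simp [PIter_eq_zIter_add hσ' le_rfl hz.1, muAux]
    simpa [hP] using hz.2
  | of_succ l hl ih =>
    set m := muAux Θ σ κ (κ - (l + 1))
    set ε := ∏ j ∈ Icc (l + 1) κ, σ j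
    have hzl : z ∈ HIter Θ σ (l + 1) := HIter_antitone (by omega) hz
    have hε : ε ≠ 0 := prod_ne_zero_iff.mpr fun j hj ↦ by
      rcases hσ j (mem_Icc.mp hj).2 with h | h <;> simp [h]
    have hσl : (σ l : ℂ) * σ l = 1 := by rcases hσ l hl.le with h | h <;> simp [h]
    have hv : σ l * zIter Θ σ l z / (Real.exp m : ℂ) ∈ slitPlane := by
      rw [div_eq_inv_mul, ← Complex.ofReal_inv,
        Complex.ofReal_mul_mem_slitPlane_iff (inv_pos.mpr (Real.exp_pos m))]
      exact hzl.2
    rw [PIter_succ_eq_log hσ' hl hzl, Complex.ofReal_mul_log_mem_slitPlane_iff hv hε] at ih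
    have hsplit : ((∏ j ∈ Icc l κ, σ j : ℝ) : ℂ) * PIter Θ σ κ l z =
        (Real.exp m : ℂ) * (ε * (σ l * zIter Θ σ l z / (Real.exp m : ℂ) - 1)) := by
      rw [← insert_Icc_add_one_left_eq_Icc hl.le, prod_insert (by simp), Complex.ofReal_mul,
        PIter_eq_zIter_sub hσ' hl hzl.1]
      field_simp
      linear_combination (-(ε : ℂ) * Real.exp m) * hσl
    rw [hsplit, Complex.ofReal_mul_mem_slitPlane_iff (Real.exp_pos m)]
    exact ih

end

/-- **Remark 5.21** (for a fixed value of the parameter `t`): let `κ = r`, or assume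
`k^{ch} ≥ 0` and let `κ ∈ {k^{ch}, r}`. Then for every `l ∈ {0,…,κ}` the function
`𝒫_{l,κ}`, restricted to `H = HIter Θ σ (r+1)`, is holomorphic on `H`; for every
`z ∈ H` one has `(∏_{j=l}^{κ} σ j) * 𝒫_{l,κ} z ∈ ℂ⁻`; and if moreover `z` is real
then `(∏_{j=l}^{κ} σ j) * 𝒫_{l,κ} z` is a positive real number. -/
theorem PIter_mem_slitPlane (r : ℕ) (Θ σ : ℕ → ℝ)
    (hσ : ∀ i, i ≤ r → σ i = 1 ∨ σ i = -1)
    (κ : ℕ) (hκcase : κ = r ∨ (0 ≤ kch σ r ∧ (κ : ℤ) = kch σ r))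
    (l : ℕ) (hl : l ≤ κ) :
    DifferentiableOn ℂ (PIter Θ σ κ l) (HIter Θ σ (r + 1)) ∧
    (∀ z ∈ HIter Θ σ (r + 1),
      (∏ j ∈ Finset.Icc l κ, (σ j : ℂ)) * PIter Θ σ κ l z ∈ Complex.slitPlane) ∧
    (∀ z ∈ HIter Θ σ (r + 1), z.im = 0 →
      ((∏ j ∈ Finset.Icc l κ, (σ j : ℂ)) * PIter Θ σ κ l z).im = 0 ∧
        0 < ((∏ j ∈ Finset.Icc l κ, (σ j : ℂ)) * PIter Θ σ κ l z).re) := by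
  have hκr : κ ≤ r := hκcase.elim le_of_eq fun h ↦ by have := kch_lt σ r; omega
  have hσκ : ∀ i ≤ κ, σ i = 1 ∨ σ i = -1 := fun i hi ↦ hσ i (hi.trans hκr)
  have hσκ' : ∀ i < κ, σ i = 1 ∨ σ i = -1 := fun i hi ↦ hσκ i hi.le
  have hH : ∀ {n}, n ≤ r + 1 → HIter Θ σ (r + 1) ⊆ HIter Θ σ n := fun hn ↦ HIter_antitone hn
  have hslit : ∀ z ∈ HIter Θ σ (r + 1),
      (∏ j ∈ Icc l κ, (σ j : ℂ)) * PIter Θ σ κ l z ∈ slitPlane := fun z hz ↦ by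
    simpa using prod_mul_PIter_mem_slitPlane hσκ hl (hH (by omega) hz)
  refine ⟨(differentiableOn_PIter hσκ' hl).mono (hH (by omega)), hslit, fun z hz hzi ↦ ?_⟩
  have him : ((∏ j ∈ Icc l κ, (σ j : ℂ)) * PIter Θ σ κ l z).im = 0 := by
    rw [← Complex.ofReal_prod, Complex.im_ofReal_mul,
      PIter_im_eq_zero hσκ' hl (hH (by omega) hz) hzi, mul_zero]
  exact ⟨him, (mem_slitPlane_iff.mp (hslit z hz)).resolve_right (not_not.mpr him)⟩
end

section
/- Let S ⊆ ℂ be a connected set with S ∩ ℝ ≠ ∅, and let f, g : S → ℂ be continuous functions such that f(z) ∈ ℂ⁻, g(z) ∈ ℂ⁻ and f(z)·g(z) ∈ ℂ⁻ for every z ∈ S, and such that f(x) is a positive real number for every x ∈ S ∩ ℝ. Then log(f(z)·g(z)) = log(f(z)) + log(g(z)) for every z ∈ S. (Proposition 5.70 of the paper for a fixed value of the parameter t, with the hypothesis of definable connectedness replaced by connectedness.) -/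
/-!
The difference `log (f z * g z) - (log (f z) + log (g z))` is continuous on `S` and takes values
in the discrete set `2πiℤ`, so it is constant on the connected set `S`. At a real point of `S`,
`f` is a positive real, and there the logarithm of the product splits.
-/

open Complex Set

theorem IsPreconnected.eqOn_of_exp_eq {α : Type*} [TopologicalSpace α] {S : Set α}
    (hS : IsPreconnected S) {u v : α → ℂ} (hu : ContinuousOn u S) (hv : ContinuousOn v S)
    (hexp : ∀ z ∈ S, exp (u z) = exp (v z)) {x₀ : α} (hx₀ : x₀ ∈ S) (huv : u x₀ = v x₀) :
    EqOn u v S := by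
  set k : α → ℂ := fun z => (u z - v z) / (2 * Real.pi * I)
  have hk_int : MapsTo k S (range ((↑) : ℤ → ℂ)) := fun z hz => by
    have hexp_sub : exp (u z - v z) = 1 := by rw [exp_sub, hexp z hz, div_self (exp_ne_zero _)]
    obtain ⟨n, hn⟩ := exp_eq_one_iff.mp hexp_sub
    exact ⟨n, by simp only [k, hn, mul_div_cancel_right₀ _ two_pi_I_ne_zero]⟩
  have hk_const : ∀ z ∈ S, k z = k x₀ := fun z hz =>
    hS.constant_of_mapsTo isClosedEmbedding_intCast.isInducing.isDiscrete_range
      ((hu.sub hv).div_const _) hk_int hz hx₀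
  intro z hz
  simpa [k, huv, sub_eq_zero, two_pi_I_ne_zero] using hk_const z hz

theorem Complex.log_mul_of_im_eq_zero_of_re_pos {x y : ℂ} (hx_im : x.im = 0) (hx_re : 0 < x.re)
    (hy : y ≠ 0) : log (x * y) = log x + log y := by
  have hx : x = (x.re : ℂ) := ext rfl (by simpa using hx_im)
  rw [hx, log_ofReal_mul hx_re hy, ofReal_log hx_re.le]

/-- **Proposition 5.70** (for a fixed value of the parameter `t`, with definable
connectedness replaced by connectedness): let `S ⊆ ℂ` be connected with `S ∩ ℝ ≠ ∅`,
and let `f, g` be continuous on `S` with values in the slit plane `ℂ⁻ = ℂ ∖ ℝ_{≤0}`,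
such that `f z * g z ∈ ℂ⁻` for every `z ∈ S` and `f x` is a positive real for every
real `x ∈ S`. Then `log (f z * g z) = log (f z) + log (g z)` for every `z ∈ S`
(principal branch of the logarithm). -/
theorem log_mul_eq_add_of_connected (S : Set ℂ) (hS : IsConnected S)
    (hSR : ∃ x ∈ S, x.im = 0)
    (f g : ℂ → ℂ) (hf : ContinuousOn f S) (hg : ContinuousOn g S)
    (hfS : ∀ z ∈ S, f z ∈ Complex.slitPlane)
    (hgS : ∀ z ∈ S, g z ∈ Complex.slitPlane)
    (hfgS : ∀ z ∈ S, f z * g z ∈ Complex.slitPlane)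
    (hfR : ∀ x ∈ S, x.im = 0 → (f x).im = 0 ∧ 0 < (f x).re) :
    ∀ z ∈ S, Complex.log (f z * g z) = Complex.log (f z) + Complex.log (g z) := by
  obtain ⟨x₀, hx₀S, hx₀⟩ := hSR
  have hexp : ∀ z ∈ S, exp (log (f z * g z)) = exp (log (f z) + log (g z)) := fun z hz => by
    rw [exp_add, exp_log (slitPlane_ne_zero (hfgS z hz)), exp_log (slitPlane_ne_zero (hfS z hz)),
      exp_log (slitPlane_ne_zero (hgS z hz))]
  have hx₀_eq : log (f x₀ * g x₀) = log (f x₀) + log (g x₀) :=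
    log_mul_of_im_eq_zero_of_re_pos (hfR x₀ hx₀S hx₀).1 (hfR x₀ hx₀S hx₀).2
      (slitPlane_ne_zero (hgS x₀ hx₀S))
  exact hS.isPreconnected.eqOn_of_exp_eq ((hf.mul hg).clog hfgS)
    ((hf.clog hfS).add (hg.clog hgS)) hexp hx₀S hx₀_eq
end
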